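/- arXiv:1508.04961 — 4 statements merged into one kernel-verified Lean document; each statement's English description precedes it below -/
import Mathlib

section
/- Let 1 < p < 2 and n ≥ 1. There exists a constant C(p) > 0 depending only on p such that for every symmetric positive semidefinite n×n real matrix A and all vectors α, β ∈ ℝⁿ, |α|_A^p − |β|_A^p − p·|β|_A^{p-2}·(Aβ)·(α−β) ≥ C(p)·|α−β|_A^2·(|α|_A + |β|_A)^{p-2}, with the conventions that |β|_A^{p-2}·(Aβ) := 0 when |β|_A = 0 (consistent, since positive semidefiniteness gives Aβ = 0 in that case) and that the right-hand side is interpreted as 0 when |α|_A + |β|_A = 0 (in which case also |α−β|_A = 0). -/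
open MeasureTheory Filter
open scoped ENNReal Topology

noncomputable section

abbrev EucSp (n : ℕ) := EuclideanSpace ℝ (Fin n)

/-- The pairing `ξ · (A η) = ∑ᵢⱼ Aᵢⱼ ξᵢ ηⱼ`. -/
def mdot {n : ℕ} (A : Matrix (Fin n) (Fin n) ℝ) (ξ η : EucSp n) : ℝ :=
  ∑ i, ∑ j, A i j * ξ i * η j

/-- `|ξ|_A := (ξ · A ξ)^(1/2)`. -/
def anorm {n : ℕ} (A : Matrix (Fin n) (Fin n) ℝ) (ξ : EucSp n) : ℝ :=
  Real.sqrt (mdot A ξ ξ)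

/-- `φ ∈ C_c^∞(Ω)`. -/
def IsTest {n : ℕ} (Ω : Set (EucSp n)) (φ : EucSp n → ℝ) : Prop :=
  ContDiff ℝ (⊤ : ℕ∞) φ ∧ HasCompactSupport φ ∧ tsupport φ ⊆ Ω

/-- `gv` is the weak gradient of `v` on `Ω`. -/
def HasWeakGradOn {n : ℕ} (Ω : Set (EucSp n)) (v : EucSp n → ℝ) (gv : EucSp n → EucSp n) : Prop :=
  ∀ φ : EucSp n → ℝ, IsTest Ω φ → ∀ i : Fin n,
    ∫ x in Ω, v x * gradient φ x i = - ∫ x in Ω, gv x i * φ x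

/-- `u ∈ W^{1,p}_0(ω)` with weak gradient `gu`. -/
def MemW1p0 {n : ℕ} (p : ℝ) (ω : Set (EucSp n)) (u : EucSp n → ℝ) (gu : EucSp n → EucSp n) : Prop :=
  MemLp u (ENNReal.ofReal p) (volume.restrict ω) ∧
  MemLp gu (ENNReal.ofReal p) (volume.restrict ω) ∧
  HasWeakGradOn ω u gu ∧
  ∃ φ : ℕ → EucSp n → ℝ, (∀ k, IsTest ω (φ k)) ∧
    Tendsto (fun k =>
        eLpNorm (fun x => φ k x - u x) (ENNReal.ofReal p) (volume.restrict ω) +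
        eLpNorm (fun x => gradient (φ k) x - gu x) (ENNReal.ofReal p) (volume.restrict ω))
      atTop (𝓝 0)

/-- The weight `φ_q(r)` in the Morrey norm. -/
def morreyPhi (n : ℕ) (p q d r : ℝ) : ℝ :=
  if p < n then r ^ (-((n : ℝ) * (q - 1) / q))
  else if p = (n : ℝ) then (Real.log (d / r)) ^ (q * ((n : ℝ) - 1) / n)
  else 1

/-- The Morrey norm `‖V‖_{M^q(p;ω)}` (valued in `[0,∞]`). -/
def morreyNorm {n : ℕ} (p q : ℝ) (ω : Set (EucSp n)) (V : EucSp n → ℝ) : ℝ≥0∞ :=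
  ⨆ y ∈ ω, ⨆ r ∈ Set.Ioo (0 : ℝ) (Metric.diam ω),
    ENNReal.ofReal (morreyPhi n p q (Metric.diam ω) r) *
      ∫⁻ x in ω ∩ Metric.ball y r, ENNReal.ofReal |V x|

/-- Admissibility of the exponent `q` for `M^q(p;ω)`. -/
def MorreyQExp (n : ℕ) (p q : ℝ) : Prop :=
  (p < n → (n : ℝ) / p < q) ∧ (p = (n : ℝ) → (n : ℝ) < q) ∧ ((n : ℝ) < p → q = 1)

/-- `V ∈ M^q(p;ω)`. -/
def MemMorrey {n : ℕ} (p q : ℝ) (ω : Set (EucSp n)) (V : EucSp n → ℝ) : Prop :=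
  Measurable V ∧ morreyNorm p q ω V < ⊤

/-- `V ∈ M^q_loc(p;Ω)`. -/
def MemMorreyLoc {n : ℕ} (p q : ℝ) (Ω : Set (EucSp n)) (V : EucSp n → ℝ) : Prop :=
  Measurable V ∧ ∀ ω : Set (EucSp n), IsOpen ω → IsCompact (closure ω) → closure ω ⊆ Ω →
    morreyNorm p q ω V < ⊤

/-- `A` is symmetric, measurable, uniformly elliptic and bounded on `ω` with constant `θ`. -/
def UnifEllipticOn {n : ℕ} (A : EucSp n → Matrix (Fin n) (Fin n) ℝ) (ω : Set (EucSp n))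
    (θ : ℝ) : Prop :=
  0 < θ ∧ (∀ x, (A x).IsSymm) ∧ (∀ i j, Measurable fun x => A x i j) ∧
  ∀ᵐ x ∂(volume.restrict ω), ∀ ξ : EucSp n,
    θ * ‖ξ‖ ≤ anorm (A x) ξ ∧ anorm (A x) ξ ≤ θ⁻¹ * ‖ξ‖

/-- `A` is symmetric, measurable, locally uniformly positive definite and locally bounded on `Ω`. -/
def LocUnifElliptic {n : ℕ} (A : EucSp n → Matrix (Fin n) (Fin n) ℝ) (Ω : Set (EucSp n)) : Prop :=
  (∀ x, (A x).IsSymm) ∧ (∀ i j, Measurable fun x => A x i j) ∧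
  ∀ ω : Set (EucSp n), IsOpen ω → IsCompact (closure ω) → closure ω ⊆ Ω →
    ∃ θ : ℝ, 0 < θ ∧ ∀ᵐ x ∂(volume.restrict ω), ∀ ξ : EucSp n,
      θ * ‖ξ‖ ≤ anorm (A x) ξ ∧ anorm (A x) ξ ≤ θ⁻¹ * ‖ξ‖

/-- `v ∈ W^{1,p}_loc(Ω)` with weak gradient `gv`. -/
def MemW1pLocOn {n : ℕ} (p : ℝ) (Ω : Set (EucSp n)) (v : EucSp n → ℝ)
    (gv : EucSp n → EucSp n) : Prop :=
  (∀ K : Set (EucSp n), IsCompact K → K ⊆ Ω → MemLp v (ENNReal.ofReal p) (volume.restrict K)) ∧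
  (∀ K : Set (EucSp n), IsCompact K → K ⊆ Ω → MemLp gv (ENNReal.ofReal p) (volume.restrict K)) ∧
  HasWeakGradOn Ω v gv



/-- Bernoulli for exponent in (0,1): `r^q ≤ 1 + q*(r-1)` for `r ≥ 0`. -/
lemma bern_concave {r q : ℝ} (hr : 0 ≤ r) (hq0 : 0 < q) (hq1 : q < 1) :
    r ^ q ≤ 1 + q * (r - 1) := by
  rcases eq_or_ne r 1 with rfl | hne
  · simp
  · have h := rpow_one_add_lt_one_add_mul_self (s := r - 1)
      (by linarith) (by intro h; apply hne; linarith) hq0 hq1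
    have : 1 + (r - 1) = r := by ring
    rw [this] at h
    exact h.le

/-- One-variable inequality, case `a ≤ b` (with `r = a/b`). -/
lemma scalar_one {p : ℝ} (hp1 : 1 < p) (hp2 : p < 2) :
    ∀ r ∈ Set.Icc (0:ℝ) 1,
      p * (p-1)/2 * (1 - r)^2 ≤ r ^ p - 1 + p * (1 - r) := by
  set f : ℝ → ℝ := fun r => r ^ p - 1 + p * (1 - r) - (p * (p-1)/2) * (1 - r)^2 with hf
  have hderiv : ∀ x ∈ Set.Ioo (0:ℝ) 1,
      HasDerivAt f (p * x ^ (p-1) - p + p * (p-1) * (1 - x)) x := by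
    intro x hx
    have h1 : HasDerivAt (fun r : ℝ => r ^ p) (p * x ^ (p-1)) x :=
      Real.hasDerivAt_rpow_const (Or.inl hx.1.ne')
    have h2 : HasDerivAt (fun r : ℝ => 1 - r) (-1) x := (hasDerivAt_id x).const_sub 1
    have h3 : HasDerivAt (fun r : ℝ => (1 - r)^2) (2 * (1 - x) ^ 1 * (-1)) x := h2.pow 2
    have := ((h1.sub_const 1).add (h2.const_mul p)).sub (h3.const_mul (p * (p-1)/2))
    refine this.congr_deriv ?_
    ring
  have hcont : ContinuousOn f (Set.Icc 0 1) := by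
    apply ContinuousOn.sub
    apply ContinuousOn.add
    apply ContinuousOn.sub
    · exact fun x _ => (Real.continuousAt_rpow_const x p (Or.inr (by linarith))).continuousWithinAt
    · exact continuousOn_const
    · exact (continuous_const.mul (continuous_const.sub continuous_id)).continuousOn
    · exact (continuous_const.mul ((continuous_const.sub continuous_id).pow 2)).continuousOn
  have hanti : AntitoneOn f (Set.Icc 0 1) := by
    apply antitoneOn_of_deriv_nonpos (convex_Icc 0 1) hcont
    · rw [interior_Icc]
      exact fun x hx => (hderiv x hx).differentiableAt.differentiableWithinAt
    · rw [interior_Icc]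
      intro x hx
      rw [(hderiv x hx).deriv]
      have hbern : x ^ (p-1) ≤ 1 + (p-1) * (x - 1) :=
        bern_concave hx.1.le (by linarith) (by linarith)
      nlinarith [hx.1, hx.2]
  intro r hr
  have h0 : f 1 = 0 := by simp [hf, Real.one_rpow]
  have := hanti hr (Set.mem_Icc.mpr ⟨zero_le_one, le_refl 1⟩) hr.2
  rw [h0] at this
  simp only [hf] at this
  linarith

/-- One-variable inequality, case `b ≤ a` (with `r = b/a`). -/
lemma scalar_two {p : ℝ} (hp1 : 1 < p) (hp2 : p < 2) :
    ∀ r ∈ Set.Icc (0:ℝ) 1,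
      p * (p-1)/2 * (1 - r)^2 ≤ 1 - r ^ p - p * r ^ (p-1) * (1 - r) := by
  set f : ℝ → ℝ := fun r => 1 - r ^ p - p * r ^ (p-1) * (1 - r) - (p * (p-1)/2) * (1 - r)^2 with hf
  have hderiv : ∀ x ∈ Set.Ioo (0:ℝ) 1,
      HasDerivAt f (-(p * (p-1) * x ^ (p-2) * (1 - x)) + p * (p-1) * (1 - x)) x := by
    intro x hx
    have h1 : HasDerivAt (fun r : ℝ => r ^ p) (p * x ^ (p-1)) x :=
      Real.hasDerivAt_rpow_const (Or.inl hx.1.ne')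
    have h1' : HasDerivAt (fun r : ℝ => r ^ (p-1)) ((p-1) * x ^ (p-1-1)) x :=
      Real.hasDerivAt_rpow_const (Or.inl hx.1.ne')
    have h2 : HasDerivAt (fun r : ℝ => 1 - r) (-1) x := (hasDerivAt_id x).const_sub 1
    have h3 : HasDerivAt (fun r : ℝ => (1 - r)^2) (2 * (1 - x) ^ 1 * (-1)) x := h2.pow 2
    have h4 : HasDerivAt (fun r : ℝ => p * r ^ (p-1) * (1 - r))
        ((p * ((p-1) * x ^ (p-1-1))) * (1 - x) + (p * x ^ (p-1)) * (-1)) x :=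
      (h1'.const_mul p).mul h2
    have := ((h1.const_sub 1).sub h4).sub (h3.const_mul (p * (p-1)/2))
    refine this.congr_deriv ?_
    have e1 : x ^ (p-1) = x ^ (p-2) * x := by
      rw [← Real.rpow_add_one hx.1.ne' (p-2)]
      congr 1
      ring
    have e2 : p - 1 - 1 = p - 2 := by ring
    rw [e2] at this ⊢
    rw [e1]
    ring
  have hcont : ContinuousOn f (Set.Icc 0 1) := by
    apply ContinuousOn.sub
    apply ContinuousOn.sub
    apply ContinuousOn.sub
    · exact continuousOn_const
    · exact fun x _ => (Real.continuousAt_rpow_const x p (Or.inr (by linarith))).continuousWithinAt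
    · apply ContinuousOn.mul
      · exact ContinuousOn.mul continuousOn_const
          (fun x _ => (Real.continuousAt_rpow_const x (p-1) (Or.inr (by linarith))).continuousWithinAt)
      · exact (continuous_const.sub continuous_id).continuousOn
    · exact (continuous_const.mul ((continuous_const.sub continuous_id).pow 2)).continuousOn
  have hanti : AntitoneOn f (Set.Icc 0 1) := by
    apply antitoneOn_of_deriv_nonpos (convex_Icc 0 1) hcont
    · rw [interior_Icc]
      exact fun x hx => (hderiv x hx).differentiableAt.differentiableWithinAt
    · rw [interior_Icc]
      intro x hx
      rw [(hderiv x hx).deriv]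
      have hx1 : 1 ≤ x ^ (p-2) :=
        Real.one_le_rpow_of_pos_of_le_one_of_nonpos hx.1 hx.2.le (by linarith)
      have hpp : (0:ℝ) ≤ p * (p-1) := by nlinarith
      have hkey : 0 ≤ (p * (p-1) * (1 - x)) * (x ^ (p-2) - 1) :=
        mul_nonneg (mul_nonneg hpp (by linarith [hx.2])) (by linarith [hx1])
      linarith [hkey]
  intro r hr
  have h0 : f 1 = 0 := by simp [hf, Real.one_rpow]
  have := hanti hr (Set.mem_Icc.mpr ⟨zero_le_one, le_refl 1⟩) hr.2
  rw [h0] at this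
  simp only [hf] at this
  linarith

/-- Two-variable scalar inequality. -/
lemma scalar_main {p : ℝ} (hp1 : 1 < p) (hp2 : p < 2) {a b : ℝ} (ha : 0 ≤ a) (hb : 0 ≤ b) :
    p * (p-1)/2 * (a - b)^2 * (max a b) ^ (p-2) ≤ a ^ p - b ^ p - p * b ^ (p-1) * (a - b) := by
  rcases le_total a b with hab | hab
  · -- a ≤ b, max = b
    rcases eq_or_lt_of_le hb with hb0 | hb0
    · -- b = 0, hence a = 0
      have ha0 : a = 0 := le_antisymm (hab.trans hb0.symm.le) ha
      rw [ha0, ← hb0]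
      simp [Real.zero_rpow (by linarith : p ≠ 0), Real.zero_rpow (by linarith : p - 1 ≠ 0),
        Real.zero_rpow (by linarith : p - 2 ≠ 0)]
    · have hbne : b ≠ 0 := hb0.ne'
      have hmax : max a b = b := max_eq_right hab
      set r : ℝ := a / b with hr
      have hr01 : r ∈ Set.Icc (0:ℝ) 1 :=
        ⟨div_nonneg ha hb, (div_le_one hb0).mpr hab⟩
      have h := scalar_one hp1 hp2 r hr01
      have hbp : (0:ℝ) < b ^ p := Real.rpow_pos_of_pos hb0 p
      have e1 : b ^ p * r ^ p = a ^ p := by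
        rw [hr, Real.div_rpow ha hb, mul_div_cancel₀]
        exact (Real.rpow_pos_of_pos hb0 p).ne'
      have e4 : b ^ p = b * b ^ (p-1) := by
        nth_rewrite 1 [show p = 1 + (p-1) by ring]
        rw [Real.rpow_add hb0, Real.rpow_one]
      have e2 : b ^ p * r = a * b ^ (p-1) := by
        rw [hr, e4]; field_simp
      have e3 : b ^ p * (1 - r)^2 = (a - b)^2 * b ^ (p-2) := by
        have : b ^ p = b^2 * b ^ (p-2) := by
          rw [← Real.rpow_natCast b 2, ← Real.rpow_add hb0]
          congr 1; ring
        rw [hr, this]; field_simp; ring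
      calc p * (p-1)/2 * (a - b)^2 * (max a b) ^ (p-2)
          = b ^ p * (p * (p-1)/2 * (1 - r)^2) := by rw [hmax]; linear_combination (-(p * (p-1)/2)) * e3
        _ ≤ b ^ p * (r ^ p - 1 + p * (1 - r)) := by
            exact mul_le_mul_of_nonneg_left h hbp.le
        _ = a ^ p - b ^ p - p * b ^ (p-1) * (a - b) := by
            linear_combination e1 - p * e2 + p * e4
  · -- b ≤ a, max = a
    rcases eq_or_lt_of_le ha with ha0 | ha0
    · have hb0 : b = 0 := le_antisymm (hab.trans ha0.symm.le) hb
      rw [hb0, ← ha0]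
      simp [Real.zero_rpow (by linarith : p ≠ 0), Real.zero_rpow (by linarith : p - 1 ≠ 0),
        Real.zero_rpow (by linarith : p - 2 ≠ 0)]
    · have hane : a ≠ 0 := ha0.ne'
      have hmax : max a b = a := max_eq_left hab
      set r : ℝ := b / a with hr
      have hr01 : r ∈ Set.Icc (0:ℝ) 1 :=
        ⟨div_nonneg hb ha, (div_le_one ha0).mpr hab⟩
      have h := scalar_two hp1 hp2 r hr01
      have hap : (0:ℝ) < a ^ p := Real.rpow_pos_of_pos ha0 p
      have e1 : a ^ p * r ^ p = b ^ p := by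
        rw [hr, Real.div_rpow hb ha, mul_div_cancel₀]
        exact (Real.rpow_pos_of_pos ha0 p).ne'
      have e4 : a ^ p = a * a ^ (p-1) := by
        nth_rewrite 1 [show p = 1 + (p-1) by ring]
        rw [Real.rpow_add ha0, Real.rpow_one]
      have e2 : a ^ p * (r ^ (p-1) * (1 - r)) = b ^ (p-1) * (a - b) := by
        have h5 : a ^ p * r ^ (p-1) = a * b ^ (p-1) := by
          rw [hr, Real.div_rpow hb ha, e4]
          field_simp
        calc a ^ p * (r ^ (p-1) * (1 - r)) = (a ^ p * r ^ (p-1)) * (1 - r) := by ring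
          _ = a * b ^ (p-1) * (1 - b/a) := by rw [h5, hr]
          _ = b ^ (p-1) * (a - b) := by field_simp
      have e3 : a ^ p * (1 - r)^2 = (a - b)^2 * a ^ (p-2) := by
        have : a ^ p = a^2 * a ^ (p-2) := by
          rw [← Real.rpow_natCast a 2, ← Real.rpow_add ha0]
          congr 1; ring
        rw [hr, this]; field_simp
      calc p * (p-1)/2 * (a - b)^2 * (max a b) ^ (p-2)
          = a ^ p * (p * (p-1)/2 * (1 - r)^2) := by rw [hmax]; linear_combination (-(p * (p-1)/2)) * e3
        _ ≤ a ^ p * (1 - r ^ p - p * r ^ (p-1) * (1 - r)) := by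
            exact mul_le_mul_of_nonneg_left h hap.le
        _ = a ^ p - b ^ p - p * b ^ (p-1) * (a - b) := by
            linear_combination -e1 - p * e2

set_option maxHeartbeats 1000000 in
/-- **Lindqvist-type vector inequality, case `1 < p < 2`.** -/
theorem vector_inequality_p_lt_two (p : ℝ) (hp1 : 1 < p) (hp2 : p < 2) :
    ∃ C : ℝ, 0 < C ∧
      ∀ n : ℕ, 1 ≤ n →
      ∀ A : Matrix (Fin n) (Fin n) ℝ, A.IsSymm → A.PosSemidef →
      ∀ α β : EucSp n,
        anorm A α ^ p - anorm A β ^ p - p * anorm A β ^ (p - 2) * mdot A (α - β) β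
          ≥ C * anorm A (α - β) ^ (2 : ℝ) * (anorm A α + anorm A β) ^ (p - 2) := by
  refine ⟨p * (p-1)/2, by nlinarith, ?_⟩
  intro n _ A _ hpsd α β
  open scoped MatrixOrder in obtain ⟨B, hB⟩ := CStarAlgebra.nonneg_iff_eq_star_mul_self.mp hpsd.nonneg
  have hA : ∀ i j, A i j = ∑ k, B k i * B k j := by
    intro i j
    rw [hB]
    simp [Matrix.mul_apply, Matrix.conjTranspose_apply, Matrix.star_eq_conjTranspose]
  -- key representation
  have key : ∀ ξ η : EucSp n,
      mdot A ξ η = ∑ k, (∑ i, B k i * ξ i) * (∑ j, B k j * η j) := by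
    intro ξ η
    have h1 : ∀ k, (∑ i, B k i * ξ i) * (∑ j, B k j * η j)
        = ∑ i, ∑ j, (B k i * ξ i) * (B k j * η j) := fun k => Finset.sum_mul_sum _ _ _ _
    calc mdot A ξ η = ∑ i, ∑ j, ∑ k, (B k i * ξ i) * (B k j * η j) := by
          simp only [mdot, hA, Finset.sum_mul]
          exact Finset.sum_congr rfl fun i _ => Finset.sum_congr rfl fun j _ =>
            Finset.sum_congr rfl fun k _ => by ring
      _ = ∑ i, ∑ k, ∑ j, (B k i * ξ i) * (B k j * η j) :=
          Finset.sum_congr rfl fun i _ => Finset.sum_comm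
      _ = ∑ k, ∑ i, ∑ j, (B k i * ξ i) * (B k j * η j) := Finset.sum_comm
      _ = ∑ k, (∑ i, B k i * ξ i) * (∑ j, B k j * η j) :=
          Finset.sum_congr rfl fun k _ => (h1 k).symm
  set u : Fin n → ℝ := fun k => ∑ i, B k i * α i with hu
  set v : Fin n → ℝ := fun k => ∑ i, B k i * β i with hv
  have hsubL : ∀ k, (∑ i, B k i * (α - β) i) = u k - v k := by
    intro k
    simp only [hu, hv, PiLp.sub_apply, mul_sub, Finset.sum_sub_distrib]
  have hmαα : mdot A α α = ∑ k, u k * u k := key α α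
  have hmββ : mdot A β β = ∑ k, v k * v k := key β β
  have hmαβ : mdot A α β = ∑ k, u k * v k := key α β
  have hmδβ : mdot A (α - β) β = ∑ k, u k * v k - ∑ k, v k * v k := by
    rw [key (α - β) β]
    simp only [hsubL]
    rw [← Finset.sum_sub_distrib]
    exact Finset.sum_congr rfl fun k _ => by ring
  have hmδδ : mdot A (α - β) (α - β)
      = ∑ k, u k * u k - 2 * (∑ k, u k * v k) + ∑ k, v k * v k := by
    calc mdot A (α - β) (α - β) = ∑ k, (u k - v k) * (u k - v k) := by
          rw [key (α - β) (α - β)]; simp only [hsubL]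
      _ = ∑ k, (u k * u k - 2 * (u k * v k) + v k * v k) :=
          Finset.sum_congr rfl fun k _ => by ring
      _ = ∑ k, u k * u k - 2 * (∑ k, u k * v k) + ∑ k, v k * v k := by
          rw [Finset.sum_add_distrib, Finset.sum_sub_distrib, Finset.mul_sum]
  set a : ℝ := anorm A α with ha'
  set b : ℝ := anorm A β with hb'
  have hmαα0 : 0 ≤ mdot A α α := by
    rw [hmαα]; exact Finset.sum_nonneg fun k _ => mul_self_nonneg _
  have hmββ0 : 0 ≤ mdot A β β := by
    rw [hmββ]; exact Finset.sum_nonneg fun k _ => mul_self_nonneg _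
  have ha0 : 0 ≤ a := Real.sqrt_nonneg _
  have hb0 : 0 ≤ b := Real.sqrt_nonneg _
  have ha2 : a ^ 2 = mdot A α α := Real.sq_sqrt hmαα0
  have hb2 : b ^ 2 = mdot A β β := Real.sq_sqrt hmββ0
  set s : ℝ := mdot A α β with hs'
  -- Cauchy-Schwarz
  have hCS : s ≤ a * b := by
    have h2 : s ^ 2 ≤ (a * b) ^ 2 := by
      rw [mul_pow, ha2, hb2, hmαα, hmββ, hmαβ]
      have := Finset.sum_mul_sq_le_sq_mul_sq Finset.univ u v
      simpa [sq] using this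
    rcases le_or_gt s 0 with h | h
    · exact h.trans (mul_nonneg ha0 hb0)
    · nlinarith [h2, mul_nonneg ha0 hb0]
  have hδ0 : 0 ≤ mdot A (α - β) (α - β) := by
    rw [hmδδ, ← hmαβ, ← hmαα, ← hmββ, ← ha2, ← hb2]
    nlinarith [hCS, sq_nonneg (a - b)]
  have hwsq : anorm A (α - β) ^ (2:ℝ) = a ^ 2 - 2 * s + b ^ 2 := by
    have h2 : anorm A (α - β) ^ (2:ℝ) = mdot A (α - β) (α - β) := by
      rw [anorm, show (2:ℝ) = ((2:ℕ):ℝ) from by norm_num, Real.rpow_natCast]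
      exact Real.sq_sqrt hδ0
    rw [h2, hmδδ, ← hmαβ, ← hmαα, ← hmββ, ← ha2, ← hb2]
  have hδβ : mdot A (α - β) β = s - b ^ 2 := by
    rw [hmδβ, ← hmαβ, ← hmββ, ← hb2]
  rw [ge_iff_le, hwsq, hδβ]
  rcases eq_or_lt_of_le hb0 with hbz | hbpos
  · -- b = 0 case
    have hmββz : mdot A β β = 0 := by rw [← hb2, ← hbz]; ring
    have hvz : ∀ k, v k = 0 := by
      intro k
      have := (Finset.sum_eq_zero_iff_of_nonneg
        (fun k _ => mul_self_nonneg (v k))).mp (by rw [← hmββ, hmββz]) k (Finset.mem_univ k)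
      nlinarith [this]
    have hsz : s = 0 := by
      rw [hmαβ]
      exact Finset.sum_eq_zero fun k _ => by rw [hvz k]; ring
    rw [← hbz, hsz]
    simp only [Real.zero_rpow (by linarith : p ≠ 0), Real.zero_rpow (by linarith : p - 2 ≠ 0),
      add_zero, sub_zero, mul_zero]
    norm_num
    rcases eq_or_lt_of_le ha0 with haz | hapos
    · rw [← haz]
      simp [Real.zero_rpow (by linarith : p ≠ 0), Real.zero_rpow (by linarith : p - 2 ≠ 0)]
    · have hkey : a ^ 2 * a ^ (p - 2) = a ^ p := by
        rw [← Real.rpow_natCast a 2, ← Real.rpow_add hapos]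
        congr 1; push_cast; ring
      have hap : 0 < a ^ p := Real.rpow_pos_of_pos hapos p
      have hC1 : p * (p - 1) / 2 ≤ 1 := by nlinarith
      calc p * (p - 1) / 2 * a ^ 2 * a ^ (p - 2) = p * (p - 1) / 2 * a ^ p := by
            rw [mul_assoc, hkey]
        _ ≤ 1 * a ^ p := mul_le_mul_of_nonneg_right hC1 hap.le
        _ = a ^ p := one_mul _
  · -- b > 0 case
    have hsc := scalar_main hp1 hp2 ha0 hb0
    have hY0 : (0:ℝ) ≤ (a + b) ^ (p - 2) := Real.rpow_nonneg (by linarith) _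
    have hYb : (a + b) ^ (p - 2) ≤ b ^ (p - 2) :=
      Real.rpow_le_rpow_of_nonpos hbpos (by linarith) (by linarith)
    have hYM : (a + b) ^ (p - 2) ≤ (max a b) ^ (p - 2) :=
      Real.rpow_le_rpow_of_nonpos (lt_max_iff.mpr (Or.inr hbpos))
        (max_le (by linarith) (by linarith)) (by linarith)
    have e1 : b ^ (p - 1) = b ^ (p - 2) * b := by
      rw [← Real.rpow_add_one hbpos.ne' (p - 2)]
      congr 1; ring
    rw [e1] at hsc
    have h1 : p * (p-1)/2 * (a - b)^2 * (a + b) ^ (p-2)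
        ≤ a ^ p - b ^ p - p * (b ^ (p-2) * b) * (a - b) := by
      refine le_trans ?_ hsc
      have hc2 : (0:ℝ) ≤ p * (p-1)/2 * (a - b)^2 :=
        mul_nonneg (by nlinarith) (sq_nonneg _)
      exact mul_le_mul_of_nonneg_left hYM hc2
    have h2 : 0 ≤ (a * b - s) * (p * b ^ (p-2) - 2 * (p * (p-1)/2) * (a + b) ^ (p-2)) := by
      apply mul_nonneg (by linarith)
      have t1 : 0 ≤ p * (b ^ (p-2) - (a + b) ^ (p-2)) :=
        mul_nonneg (by linarith) (by linarith)
      have t2 : 0 ≤ (p * (2 - p)) * (a + b) ^ (p-2) :=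
        mul_nonneg (by nlinarith) hY0
      linarith [t1, t2]
    linarith [h1, h2]
end
end

section
/- Let 1 < p < ∞ and n ≥ 1. For every symmetric positive semidefinite n×n real matrix A and all X, Y ∈ ℝⁿ, (|X|_A^{p-2}·AX − |Y|_A^{p-2}·AY)·(X − Y) ≥ (|X|_A^{p-1} − |Y|_A^{p-1})·(|X|_A − |Y|_A) ≥ 0, with the convention that |Z|_A^{p-2}·AZ := 0 whenever |Z|_A = 0 (consistent, since positive semidefiniteness gives AZ = 0 in that case). -/
open MeasureTheory Filter
open scoped ENNReal Topology

noncomputable section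

section MdotAux
variable {n : ℕ} (A : Matrix (Fin n) (Fin n) ℝ)

lemma mdot_self_nonneg (hpsd : A.PosSemidef) (ξ : EucSp n) : 0 ≤ mdot A ξ ξ := by
  have := hpsd.dotProduct_mulVec_nonneg (ξ : Fin n → ℝ)
  simpa [mdot, dotProduct, Matrix.mulVec, Finset.mul_sum, mul_comm, mul_assoc,
    mul_left_comm] using this

lemma mdot_symm (hsymm : A.IsSymm) (ξ η : EucSp n) : mdot A ξ η = mdot A η ξ := by
  unfold mdot
  rw [Finset.sum_comm]
  refine Finset.sum_congr rfl fun i _ => Finset.sum_congr rfl fun j _ => ?_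
  rw [← hsymm.apply i j]; ring

lemma mdot_expand (t : ℝ) (X Y : EucSp n) :
    mdot A (X + t • Y) (X + t • Y)
      = mdot A X X + t * mdot A X Y + t * mdot A Y X + t ^ 2 * mdot A Y Y := by
  simp only [mdot, PiLp.add_apply, PiLp.smul_apply, smul_eq_mul, Finset.mul_sum,
    ← Finset.sum_add_distrib]
  refine Finset.sum_congr rfl fun i _ => Finset.sum_congr rfl fun j _ => ?_
  ring

lemma mdot_sub_left (X Y Z : EucSp n) :
    mdot A (X - Y) Z = mdot A X Z - mdot A Y Z := by
  simp only [mdot, PiLp.sub_apply, ← Finset.sum_sub_distrib]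
  refine Finset.sum_congr rfl fun i _ => Finset.sum_congr rfl fun j _ => ?_
  ring

lemma mdot_cauchy (hsymm : A.IsSymm) (hpsd : A.PosSemidef) (X Y : EucSp n) :
    |mdot A X Y| ≤ anorm A X * anorm A Y := by
  have hq : ∀ t : ℝ, 0 ≤ mdot A Y Y * (t * t) + (2 * mdot A X Y) * t + mdot A X X := by
    intro t
    have h := mdot_self_nonneg A hpsd (X + t • Y)
    rw [mdot_expand, ← mdot_symm A hsymm X Y] at h
    nlinarith [h]
  have hd := discrim_le_zero hq
  unfold discrim at hd
  have hXX := mdot_self_nonneg A hpsd X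
  have hYY := mdot_self_nonneg A hpsd Y
  have hsq : mdot A X Y ^ 2 ≤ mdot A X X * mdot A Y Y := by nlinarith
  have : |mdot A X Y| = Real.sqrt (mdot A X Y ^ 2) := (Real.sqrt_sq_eq_abs _).symm
  rw [this, anorm, anorm, ← Real.sqrt_mul hXX]
  exact Real.sqrt_le_sqrt hsq

lemma rpow_shift {p : ℝ} (hp : 1 < p) (x y : ℝ) (hx : 0 ≤ x) :
    x ^ (p - 1) * y = x ^ (p - 2) * (x * y) := by
  rcases eq_or_lt_of_le hx with h | h
  · rw [← h, Real.zero_rpow (by linarith : p - 1 ≠ 0)]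
    ring
  · rw [show p - 1 = (p - 2) + 1 by ring, Real.rpow_add h, Real.rpow_one]
    ring

end MdotAux

/-- **Monotonicity of the `(p,A)`-Laplacian vector field.** -/
theorem mdot_monotone (p : ℝ) (hp1 : 1 < p) (n : ℕ) (hn : 1 ≤ n)
    (A : Matrix (Fin n) (Fin n) ℝ) (hsymm : A.IsSymm) (hpsd : A.PosSemidef)
    (X Y : EucSp n) :
    anorm A X ^ (p - 2) * mdot A (X - Y) X - anorm A Y ^ (p - 2) * mdot A (X - Y) Y
        ≥ (anorm A X ^ (p - 1) - anorm A Y ^ (p - 1)) * (anorm A X - anorm A Y)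
      ∧ (anorm A X ^ (p - 1) - anorm A Y ^ (p - 1)) * (anorm A X - anorm A Y) ≥ 0 := by
  set a := anorm A X with ha
  set b := anorm A Y with hb
  have ha0 : 0 ≤ a := Real.sqrt_nonneg _
  have hb0 : 0 ≤ b := Real.sqrt_nonneg _
  set m := mdot A X Y with hm
  have hmab : m ≤ a * b := (abs_le.1 (mdot_cauchy A hsymm hpsd X Y)).2
  have hXX : mdot A X X = a * a := by
    rw [ha, anorm, Real.mul_self_sqrt (mdot_self_nonneg A hpsd X)]
  have hYY : mdot A Y Y = b * b := by
    rw [hb, anorm, Real.mul_self_sqrt (mdot_self_nonneg A hpsd Y)]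
  have hE1 : mdot A (X - Y) X = a * a - m := by
    rw [mdot_sub_left, hXX, mdot_symm A hsymm Y X, ← hm]
  have hE2 : mdot A (X - Y) Y = m - b * b := by
    rw [mdot_sub_left, hYY, ← hm]
  have hpa2 : (0:ℝ) ≤ a ^ (p - 2) := Real.rpow_nonneg ha0 _
  have hpb2 : (0:ℝ) ≤ b ^ (p - 2) := Real.rpow_nonneg hb0 _
  have h1 := rpow_shift hp1 a a ha0
  have h2 := rpow_shift hp1 a b ha0
  have h3 := rpow_shift hp1 b b hb0
  have h4 := rpow_shift hp1 b a hb0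
  constructor
  · rw [hE1, hE2]
    nlinarith [mul_nonneg hpa2 (sub_nonneg.2 hmab), mul_nonneg hpb2 (sub_nonneg.2 hmab)]
  · rcases le_total a b with h | h
    · have : a ^ (p - 1) ≤ b ^ (p - 1) :=
        Real.rpow_le_rpow ha0 h (by linarith)
      nlinarith
    · have : b ^ (p - 1) ≤ a ^ (p - 1) :=
        Real.rpow_le_rpow hb0 h (by linarith)
      nlinarith
end
end

section
/- Let n ≥ 2, 1 < p < ∞ with p' = p/(p−1), let Ω ⊆ ℝⁿ be a domain, let A be locally uniformly positive definite and locally bounded on Ω, and let V ∈ M^q_loc(p;Ω). Suppose there exists a measurable vector field T : Ω → ℝⁿ with ∫_ω |T|^{p'} dx < ∞ for every open ω with compact closure in Ω, which is a weak subsolution of −div(AT) + (p−1)|T|_A^{p'} = V in Ω, i.e. ∫_Ω (A T)·∇φ dx + (p−1)·∫_Ω |T|_A^{p'}·φ dx ≤ ∫_Ω V·φ dx for every nonnegative φ ∈ C_c^∞(Ω). Then Q_{A,p,V}[u] := ∫_Ω (|∇u|_A^p + V|u|^p) dx ≥ 0 for every u ∈ C_c^∞(Ω). -/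
open MeasureTheory Filter
open scoped ENNReal Topology

noncomputable section

section AuxLemmas

variable {n : ℕ} {A : Matrix (Fin n) (Fin n) ℝ} {ξ η : EucSp n}

lemma mdot_zero_left : mdot A 0 η = 0 := by
  simp [mdot]

lemma mdot_zero_right : mdot A ξ 0 = 0 := by
  simp [mdot]

lemma mdot_smul_left (c : ℝ) : mdot A (c • ξ) η = c * mdot A ξ η := by
  simp only [mdot, Finset.mul_sum]
  refine Finset.sum_congr rfl fun i _ => Finset.sum_congr rfl fun j _ => ?_
  simp only [PiLp.smul_apply, smul_eq_mul]; ring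

lemma mdot_add_left (ξ' : EucSp n) : mdot A (ξ + ξ') η = mdot A ξ η + mdot A ξ' η := by
  simp only [mdot, ← Finset.sum_add_distrib]
  refine Finset.sum_congr rfl fun i _ => Finset.sum_congr rfl fun j _ => ?_
  simp only [PiLp.add_apply]; ring

lemma mdot_smul_right (c : ℝ) : mdot A ξ (c • η) = c * mdot A ξ η := by
  simp only [mdot, Finset.mul_sum]
  refine Finset.sum_congr rfl fun i _ => Finset.sum_congr rfl fun j _ => ?_
  simp only [PiLp.smul_apply, smul_eq_mul]; ring

lemma mdot_add_right (η' : EucSp n) : mdot A ξ (η + η') = mdot A ξ η + mdot A ξ η' := by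
  simp only [mdot, ← Finset.sum_add_distrib]
  refine Finset.sum_congr rfl fun i _ => Finset.sum_congr rfl fun j _ => ?_
  simp only [PiLp.add_apply]; ring

lemma mdot_comm (hA : A.IsSymm) : mdot A ξ η = mdot A η ξ := by
  rw [mdot, Finset.sum_comm, mdot]
  refine Finset.sum_congr rfl fun i _ => Finset.sum_congr rfl fun j _ => ?_
  rw [hA.apply i j]; ring

lemma anorm_nonneg : 0 ≤ anorm A ξ := Real.sqrt_nonneg _

lemma anorm_zero : anorm A 0 = 0 := by simp [anorm, mdot_zero_left]

lemma anorm_smul (c : ℝ) : anorm A (c • ξ) = |c| * anorm A ξ := by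
  rw [anorm, mdot_smul_left, mdot_smul_right, ← mul_assoc, ← sq,
    Real.sqrt_mul (sq_nonneg c), Real.sqrt_sq_eq_abs, anorm]

lemma mdot_nonneg_of_lb {θ : ℝ} (hθ : 0 < θ) (h : ∀ ζ : EucSp n, θ * ‖ζ‖ ≤ anorm A ζ)
    (ζ : EucSp n) : 0 ≤ mdot A ζ ζ := by
  rcases eq_or_ne ζ 0 with rfl | hζ
  · simp [mdot_zero_left]
  · have h1 : 0 < θ * ‖ζ‖ := mul_pos hθ (norm_pos_iff.mpr hζ)
    have h2 : 0 < anorm A ζ := lt_of_lt_of_le h1 (h ζ)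
    exact (Real.sqrt_pos.mp h2).le

lemma abs_mdot_le (hA : A.IsSymm) (hpsd : ∀ ζ : EucSp n, 0 ≤ mdot A ζ ζ) :
    |mdot A ξ η| ≤ anorm A ξ * anorm A η := by
  have key : ∀ t : ℝ, 0 ≤ mdot A η η * (t * t) + 2 * mdot A ξ η * t + mdot A ξ ξ := by
    intro t
    have h := hpsd (ξ + t • η)
    rw [mdot_add_left, mdot_add_right, mdot_add_right, mdot_smul_left, mdot_smul_right,
      mdot_smul_right, mdot_comm (ξ := (η:EucSp n)) (η := ξ) hA, mdot_smul_left] at h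
    nlinarith [h]
  have hd := discrim_le_zero key
  rw [discrim] at hd
  have h2 : mdot A ξ η ^ 2 ≤ mdot A ξ ξ * mdot A η η := by nlinarith [hd]
  calc |mdot A ξ η| = Real.sqrt (mdot A ξ η ^ 2) := (Real.sqrt_sq_eq_abs _).symm
    _ ≤ Real.sqrt (mdot A ξ ξ * mdot A η η) := Real.sqrt_le_sqrt h2
    _ = anorm A ξ * anorm A η := Real.sqrt_mul (hpsd ξ) _

lemma measurable_mdot_comp {α : Type*} [MeasurableSpace α] {A : α → Matrix (Fin n) (Fin n) ℝ}
    {ξ η : α → EucSp n} (hA : ∀ i j, Measurable fun x => A x i j)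
    (hξ : Measurable ξ) (hη : Measurable η) :
    Measurable fun x => mdot (A x) (ξ x) (η x) := by
  unfold mdot
  refine Finset.measurable_sum _ fun i _ => Finset.measurable_sum _ fun j _ => ?_
  exact ((hA i j).mul ((measurable_pi_apply i).comp ((WithLp.measurable_ofLp 2 _).comp hξ))).mul ((measurable_pi_apply j).comp ((WithLp.measurable_ofLp 2 _).comp hη))

/-- Young-type pointwise inequality. -/
lemma key_young {p p' : ℝ} (hp : 1 < p) (hp' : p' = p / (p - 1)) {ε : ℝ} (hε : 0 < ε)
    {a s : ℝ} (ha : 0 ≤ a) (hs : 0 ≤ s) (u : ℝ) :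
    p * |u| * (u ^ 2 + ε ^ 2) ^ (p / 2 - 1) * a * s ≤
      a ^ p + (p - 1) * ((u ^ 2 + ε ^ 2) ^ (p / 2) * s ^ p') := by
  have hp0 : 0 < p := by linarith
  have hp1 : 0 < p - 1 := by linarith
  set w : ℝ := u ^ 2 + ε ^ 2 with hw
  have hwpos : 0 < w := by positivity
  have hcj : p.HolderConjugate p' := by
    rw [hp']; exact Real.HolderConjugate.conjExponent hp
  have hp'pos : 0 < p' := by rw [hp']; positivity
  set y : ℝ := |u| * w ^ (p / 2 - 1) * s with hy
  have hy0 : 0 ≤ y := by positivity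
  have hyoung : a * y ≤ a ^ p / p + y ^ p' / p' := by
    have := Real.young_inequality a y hcj
    rwa [abs_of_nonneg ha, abs_of_nonneg hy0] at this
  have hdiv : p / p' = p - 1 := by
    rw [hp']; field_simp
  -- bound y ^ p'
  have hu_le : |u| ≤ w ^ ((1:ℝ)/2) := by
    have h1 : |u| ^ (2:ℕ) ≤ w := by
      rw [sq_abs]; nlinarith [sq_nonneg ε]
    have h2 : (|u| ^ (2:ℕ)) ^ ((1:ℝ)/2) ≤ w ^ ((1:ℝ)/2) :=
      Real.rpow_le_rpow (by positivity) h1 (by norm_num)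
    calc |u| = (|u| ^ (2:ℕ)) ^ ((1:ℝ)/2) := by
            rw [← Real.rpow_natCast |u| 2, ← Real.rpow_mul (abs_nonneg u)]
            norm_num
      _ ≤ w ^ ((1:ℝ)/2) := h2
  have hyp' : y ^ p' ≤ w ^ (p / 2) * s ^ p' := by
    have h1 : y ^ p' = |u| ^ p' * (w ^ (p / 2 - 1)) ^ p' * s ^ p' := by
      rw [hy, Real.mul_rpow (by positivity) hs, Real.mul_rpow (abs_nonneg u) (by positivity)]
    have h2 : |u| ^ p' ≤ (w ^ ((1:ℝ)/2)) ^ p' :=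
      Real.rpow_le_rpow (abs_nonneg u) hu_le hp'pos.le
    have hpe : p' * (p - 1) = p := by
      rw [hp']; field_simp
    have h3 : (w ^ ((1:ℝ)/2)) ^ p' * (w ^ (p / 2 - 1)) ^ p' = w ^ (p / 2) := by
      rw [← Real.rpow_mul hwpos.le, ← Real.rpow_mul hwpos.le, ← Real.rpow_add hwpos]
      congr 1
      linear_combination hpe / 2
    have h4 : 0 ≤ (w ^ (p / 2 - 1)) ^ p' * s ^ p' := by positivity
    calc y ^ p' = |u| ^ p' * ((w ^ (p / 2 - 1)) ^ p' * s ^ p') := by rw [h1]; ring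
      _ ≤ (w ^ ((1:ℝ)/2)) ^ p' * ((w ^ (p / 2 - 1)) ^ p' * s ^ p') := by
          exact mul_le_mul_of_nonneg_right h2 h4
      _ = w ^ (p / 2) * s ^ p' := by rw [← mul_assoc, h3]
  have hfin : p * (a * y) ≤ a ^ p + (p - 1) * y ^ p' := by
    have h5 : p * (a * y) ≤ p * (a ^ p / p + y ^ p' / p') := by
      exact mul_le_mul_of_nonneg_left hyoung hp0.le
    have h6 : p * (a ^ p / p + y ^ p' / p') = a ^ p + (p / p') * y ^ p' := by
      field_simp
    have h7 : (p / p') * y ^ p' = (p - 1) * y ^ p' := by rw [hdiv]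
    linarith [h5, h6.le, h6.ge, h7.le]
  have h8 : (p - 1) * y ^ p' ≤ (p - 1) * (w ^ (p / 2) * s ^ p') :=
    mul_le_mul_of_nonneg_left hyp' hp1.le
  have h9 : p * |u| * w ^ (p / 2 - 1) * a * s = p * (a * y) := by rw [hy]; ring
  rw [h9]
  linarith

section phi
open InnerProductSpace

variable {n : ℕ} {p ε : ℝ} {u : EucSp n → ℝ}

/-- The regularized function `(u² + ε²)^(p/2) - ε^p`. -/
def phiEps (p ε : ℝ) (u : EucSp n → ℝ) (x : EucSp n) : ℝ :=
  (u x ^ 2 + ε ^ 2) ^ (p / 2) - ε ^ p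

lemma eps_sq_rpow (hε : 0 < ε) (hp : (0:ℝ) ≤ p) : ((ε:ℝ) ^ 2) ^ (p / 2) = ε ^ p := by
  rw [← Real.rpow_natCast ε 2, ← Real.rpow_mul hε.le]
  congr 1
  ring

lemma phiEps_nonneg (hp : 0 ≤ p) (hε : 0 < ε) (x : EucSp n) : 0 ≤ phiEps p ε u x := by
  have h1 : (ε ^ 2 : ℝ) ^ (p / 2) ≤ (u x ^ 2 + ε ^ 2) ^ (p / 2) :=
    Real.rpow_le_rpow (by positivity) (by nlinarith [sq_nonneg (u x)]) (by positivity)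
  have := eps_sq_rpow hε hp
  simp only [phiEps]; linarith

lemma phiEps_eq_zero (hp : 0 ≤ p) (hε : 0 < ε) {x : EucSp n} (hx : u x = 0) :
    phiEps p ε u x = 0 := by
  simp only [phiEps, hx]
  rw [show (0:ℝ) ^ 2 + ε ^ 2 = ε ^ 2 by ring, eps_sq_rpow hε hp]
  ring

lemma phiEps_support (hp : 0 ≤ p) (hε : 0 < ε) :
    Function.support (phiEps p ε u) ⊆ Function.support u := by
  intro x hx
  simp only [Function.mem_support] at hx ⊢
  intro h0
  exact hx (phiEps_eq_zero hp hε h0)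

lemma phiEps_le (hp : 0 ≤ p) (hε : 0 < ε) (hε1 : ε ≤ 1) (x : EucSp n) :
    phiEps p ε u x ≤ (u x ^ 2 + 1) ^ (p / 2) := by
  have h1 : (u x ^ 2 + ε ^ 2 : ℝ) ^ (p / 2) ≤ (u x ^ 2 + 1) ^ (p / 2) :=
    Real.rpow_le_rpow (by positivity) (by nlinarith) (by positivity)
  have h2 : (0:ℝ) ≤ ε ^ p := Real.rpow_nonneg hε.le p
  simp only [phiEps]; linarith

lemma phiEps_contDiff (hu : ContDiff ℝ (⊤ : ℕ∞) u) (hε : 0 < ε) :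
    ContDiff ℝ (⊤ : ℕ∞) (phiEps p ε u) := by
  have h1 : ContDiff ℝ (⊤ : ℕ∞) (fun x => u x ^ 2 + ε ^ 2) := (hu.pow 2).add contDiff_const
  rw [contDiff_iff_contDiffAt]
  intro x
  exact (h1.contDiffAt.rpow_const_of_ne (by positivity)).sub contDiffAt_const

lemma phiEps_hasGradientAt (hu : ContDiff ℝ (⊤ : ℕ∞) u) (hε : 0 < ε) (x : EucSp n) :
    HasGradientAt (phiEps p ε u)
      ((p * u x * (u x ^ 2 + ε ^ 2) ^ (p / 2 - 1)) • gradient u x) x := by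
  have hud : DifferentiableAt ℝ u x := (hu.differentiable (by simp)).differentiableAt
  have hgu : HasGradientAt u (gradient u x) x := hud.hasGradientAt
  have hF : HasFDerivAt u ((toDual ℝ (EucSp n)) (gradient u x)) x :=
    hasGradientAt_iff_hasFDerivAt.mp hgu
  set D := (toDual ℝ (EucSp n)) (gradient u x) with hD
  have hsq : HasFDerivAt (fun y => u y ^ 2 + ε ^ 2) ((u x • D + u x • D)) x := by
    have h := (hF.mul hF).add_const (ε ^ 2)
    refine h.congr_of_eventuallyEq (Filter.Eventually.of_forall fun y => ?_)
    · simp [pow_two]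
  have hr := hsq.rpow_const (p := p / 2) (Or.inl (by positivity))
  have hφ := hr.sub_const (ε ^ p)
  rw [hasGradientAt_iff_hasFDerivAt]
  have heq : (toDual ℝ (EucSp n))
        ((p * u x * (u x ^ 2 + ε ^ 2) ^ (p / 2 - 1)) • gradient u x) =
      (p / 2 * (u x ^ 2 + ε ^ 2) ^ (p / 2 - 1)) • (u x • D + u x • D) := by
    simp only [_root_.map_smul, hD, smul_add, smul_smul, ← add_smul]
    congr 1
    ring
  rw [heq]
  exact hφ

lemma gradient_phiEps (hu : ContDiff ℝ (⊤ : ℕ∞) u) (hε : 0 < ε) (x : EucSp n) :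
    gradient (phiEps p ε u) x
      = (p * u x * (u x ^ 2 + ε ^ 2) ^ (p / 2 - 1)) • gradient u x :=
  (phiEps_hasGradientAt hu hε x).gradient

lemma continuous_gradient (hu : ContDiff ℝ (⊤ : ℕ∞) u) : Continuous (gradient u) := by
  have : gradient u = fun x => (toDual ℝ (EucSp n)).symm (fderiv ℝ u x) := rfl
  rw [this]
  exact (toDual ℝ (EucSp n)).symm.continuous.comp (hu.continuous_fderiv (by simp))

lemma gradient_eq_zero_of_not_mem_tsupport (hu : ContDiff ℝ (⊤ : ℕ∞) u) {x : EucSp n}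
    (hx : x ∉ tsupport u) : gradient u x = 0 := by
  have h : fderiv ℝ u x = 0 := by
    have := support_fderiv_subset (𝕜 := ℝ) (f := u)
    by_contra hne
    exact hx (this (Function.mem_support.mpr hne))
  show (toDual ℝ (EucSp n)).symm (fderiv ℝ u x) = 0
  rw [h, map_zero]

end phi

lemma morreyPhi_pos_half {n : ℕ} {p q d : ℝ} (hd : 0 < d) :
    0 < morreyPhi n p q d (d / 2) := by
  unfold morreyPhi
  split_ifs with h1 h2
  · exact Real.rpow_pos_of_pos (half_pos hd) _
  · refine Real.rpow_pos_of_pos (Real.log_pos ?_) _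
    rw [show d / (d / 2) = 2 by field_simp]
    norm_num
  · norm_num

lemma morrey_integrableOn {n : ℕ} {p q : ℝ} {V : EucSp n → ℝ} (hVm : Measurable V)
    {ω : Set (EucSp n)} (hωc : IsCompact (closure ω))
    (hdiam : 0 < Metric.diam ω)
    (hfin : morreyNorm p q ω V < ⊤) : IntegrableOn V ω := by
  set d := Metric.diam ω with hd
  set r := d / 2 with hr
  have hr0 : 0 < r := half_pos hdiam
  have hrd : r < d := by rw [hr]; linarith
  have hφpos : 0 < morreyPhi n p q d r := morreyPhi_pos_half hdiam
  have hsub : closure ω ⊆ ⋃ y ∈ ω, Metric.ball y r := by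
    intro z hz
    rcases Metric.mem_closure_iff.mp hz r hr0 with ⟨y, hy, hlt⟩
    exact Set.mem_biUnion hy (Metric.mem_ball.mpr hlt)
  obtain ⟨b', hb'ω, hb'fin, hcov⟩ :=
    hωc.elim_finite_subcover_image (fun y _ => Metric.isOpen_ball) hsub
  have hωsub : ω ⊆ ⋃ y ∈ b', ω ∩ Metric.ball y r := by
    intro z hz
    rcases Set.mem_iUnion₂.mp (hcov (subset_closure hz)) with ⟨y, hy, hball⟩
    exact Set.mem_iUnion₂.mpr ⟨y, hy, ⟨hz, hball⟩⟩
  have key : ∀ y ∈ b', (∫⁻ x in ω ∩ Metric.ball y r, ENNReal.ofReal |V x|) < ⊤ := by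
    intro y hy
    have hle : ENNReal.ofReal (morreyPhi n p q d r) *
        (∫⁻ x in ω ∩ Metric.ball y r, ENNReal.ofReal |V x|) ≤ morreyNorm p q ω V := by
      exact le_iSup₂_of_le y (hb'ω hy) (le_iSup₂_of_le r ⟨hr0, hrd⟩ le_rfl)
    by_contra hcon
    rw [not_lt, top_le_iff] at hcon
    rw [hcon, ENNReal.mul_top (by simp [ENNReal.ofReal_eq_zero, not_le, hφpos])] at hle
    exact absurd hle (not_le.mpr hfin)
  have htot : (∫⁻ x in ω, ENNReal.ofReal |V x|) < ⊤ := by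
    haveI := hb'fin.countable.to_subtype
    calc (∫⁻ x in ω, ENNReal.ofReal |V x|)
        ≤ ∫⁻ x in ⋃ y ∈ b', ω ∩ Metric.ball y r, ENNReal.ofReal |V x| :=
          lintegral_mono_set hωsub
      _ ≤ ∑' (y : b'), ∫⁻ x in ω ∩ Metric.ball (y : EucSp n) r, ENNReal.ofReal |V x| := by
          rw [Set.biUnion_eq_iUnion]
          exact lintegral_iUnion_le _ _
      _ < ⊤ := by
          haveI := hb'fin.fintype
          rw [tsum_fintype]
          exact ENNReal.sum_lt_top.mpr fun y _ => key y y.2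
  refine ⟨hVm.aestronglyMeasurable, ?_⟩
  have hnn : ∀ x, ‖V x‖ₑ = ENNReal.ofReal |V x| := fun x => by
    rw [Real.enorm_eq_ofReal_abs]
  simpa [HasFiniteIntegral, hnn] using htot


lemma diam_pos_of_isOpen {n : ℕ} (hn : 1 ≤ n) {ω : Set (EucSp n)} (hωo : IsOpen ω)
    (hne : ω.Nonempty) (hb : Bornology.IsBounded ω) : 0 < Metric.diam ω := by
  obtain ⟨x, hx⟩ := hne
  obtain ⟨δ, hδ, hball⟩ := Metric.isOpen_iff.mp hωo x hx
  set e : EucSp n := EuclideanSpace.single (⟨0, by omega⟩ : Fin n) (δ / 2) with he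
  have hne : ‖e‖ = δ / 2 := by
    rw [he, EuclideanSpace.norm_single, Real.norm_eq_abs, abs_of_pos (by linarith)]
  have hy : x + e ∈ ω := hball (by
    rw [Metric.mem_ball, dist_eq_norm, add_sub_cancel_left, hne]; linarith)
  have hdist : dist x (x + e) = δ / 2 := by
    rw [dist_eq_norm, show x - (x + e) = -e by abel, norm_neg, hne]
  have h := Metric.dist_le_diam_of_mem hb hx hy
  rw [hdist] at h
  linarith

end AuxLemmas

set_option maxHeartbeats 2000000

/-- **From a subsolution of the first-order equation to nonnegativity of `Q_{A,p,V}`.** -/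
theorem first_order_subsolution_to_nonneg (n : ℕ) (hn : 2 ≤ n)
    (p p' q : ℝ) (hp : 1 < p) (hp' : p' = p / (p - 1)) (hq : MorreyQExp n p q)
    (Ω : Set (EucSp n)) (hΩo : IsOpen Ω) (hΩc : IsConnected Ω)
    (A : EucSp n → Matrix (Fin n) (Fin n) ℝ) (hA : LocUnifElliptic A Ω)
    (V : EucSp n → ℝ) (hV : MemMorreyLoc p q Ω V)
    (T : EucSp n → EucSp n) (hTm : Measurable T)
    (hTloc : ∀ ω : Set (EucSp n), IsOpen ω → IsCompact (closure ω) → closure ω ⊆ Ω →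
      (∫⁻ x in ω, ENNReal.ofReal (‖T x‖ ^ p')) < ⊤)
    (hsub : ∀ φ : EucSp n → ℝ, IsTest Ω φ → (∀ x, 0 ≤ φ x) →
      (∫ x in Ω, mdot (A x) (gradient φ x) (T x)) +
          (p - 1) * (∫ x in Ω, anorm (A x) (T x) ^ p' * φ x) ≤
        ∫ x in Ω, V x * φ x) :
    ∀ u : EucSp n → ℝ, IsTest Ω u →
      0 ≤ ∫ x in Ω, (anorm (A x) (gradient u x) ^ p + V x * |u x| ^ p) := by
  intro u hu
  obtain ⟨huc, husupp, huΩ⟩ := hu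
  have hp0 : (0:ℝ) < p := by linarith
  have hp1 : (0:ℝ) < p - 1 := by linarith
  have hp'1 : 1 < p' := by
    rw [hp', lt_div_iff₀ (by linarith)]; linarith
  have hp'0 : (0:ℝ) < p' := by linarith
  set K := tsupport u with hKdef
  by_cases hKne : K.Nonempty
  swap
  · -- u ≡ 0
    have hu0 : ∀ x, u x = 0 := fun x =>
      image_eq_zero_of_notMem_tsupport (by
        rw [Set.not_nonempty_iff_eq_empty] at hKne
        rw [← hKdef, hKne]; exact Set.notMem_empty x)
    have hgu0 : ∀ x, gradient u x = 0 := fun x =>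
      gradient_eq_zero_of_not_mem_tsupport huc (by
        rw [Set.not_nonempty_iff_eq_empty] at hKne
        rw [← hKdef, hKne]; exact Set.notMem_empty x)
    have hzero : (fun x => anorm (A x) (gradient u x) ^ p + V x * |u x| ^ p)
        = fun _ => (0:ℝ) := by
      funext x
      rw [hgu0 x, hu0 x, anorm_zero, Real.zero_rpow hp0.ne', abs_zero,
        Real.zero_rpow hp0.ne', mul_zero, add_zero]
    rw [hzero, integral_zero]
  -- main case
  have hKc : IsCompact K := husupp
  have hKmeas : MeasurableSet K := (isClosed_tsupport u).measurableSet
  obtain ⟨L, hLc, hKiL, hLΩ⟩ := exists_compact_between husupp hΩo huΩ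
  set ω := interior L with hωdef
  have hωo : IsOpen ω := isOpen_interior
  have hclω : closure ω ⊆ L := closure_minimal interior_subset hLc.isClosed
  have hωcc : IsCompact (closure ω) := hLc.of_isClosed_subset isClosed_closure hclω
  have hωΩ : closure ω ⊆ Ω := hclω.trans hLΩ
  have hKω : K ⊆ ω := hKiL
  have hωb : Bornology.IsBounded ω := hωcc.isBounded.subset subset_closure
  have hωvol : volume ω < ⊤ :=
    lt_of_le_of_lt (measure_mono subset_closure) hωcc.measure_lt_top
  obtain ⟨θ, hθ, hAe⟩ := hA.2.2 ω hωo hωcc hωΩ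
  have hAsymm := hA.1
  have hAmeas := hA.2.1
  have hθi : (0:ℝ) < θ⁻¹ := inv_pos.mpr hθ
  have hGood : ∀ᵐ x ∂(volume.restrict Ω), x ∈ ω → ∀ ξ : EucSp n,
      θ * ‖ξ‖ ≤ anorm (A x) ξ ∧ anorm (A x) ξ ≤ θ⁻¹ * ‖ξ‖ :=
    (ae_imp_of_ae_restrict hAe).filter_mono (MeasureTheory.ae_mono Measure.restrict_le_self)
  have hVm := hV.1
  have hdiam : 0 < Metric.diam ω :=
    diam_pos_of_isOpen (by omega) hωo (hKne.mono hKω) hωb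
  have hVω : IntegrableOn V ω volume :=
    morrey_integrableOn hVm hωcc hdiam (hV.2 ω hωo hωcc hωΩ)
  -- T integrability on ω
  have hTnm : Measurable fun x => ‖T x‖ := hTm.norm
  have hTp'm : Measurable fun x => ‖T x‖ ^ p' :=
    (Real.continuous_rpow_const hp'0.le).measurable.comp hTnm
  have hTp' : IntegrableOn (fun x => ‖T x‖ ^ p') ω volume := by
    refine ⟨hTp'm.aestronglyMeasurable, ?_⟩
    have hnn : ∀ x : EucSp n, ‖‖T x‖ ^ p'‖ₑ = ENNReal.ofReal (‖T x‖ ^ p') :=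
      fun x => Real.enorm_eq_ofReal (Real.rpow_nonneg (norm_nonneg _) _)
    simpa [HasFiniteIntegral, hnn] using hTloc ω hωo hωcc hωΩ
  have hT1 : IntegrableOn (fun x => ‖T x‖) ω volume := by
    have hone : IntegrableOn (fun _ : EucSp n => (1:ℝ)) ω volume :=
      integrableOn_const hωvol.ne
    refine Integrable.mono' (hone.add hTp')
      hTnm.aestronglyMeasurable (ae_of_all _ fun x => ?_)
    rw [Real.norm_eq_abs, abs_of_nonneg (norm_nonneg _)]
    simp only [Pi.add_apply]
    rcases le_or_gt (‖T x‖) 1 with h1 | h1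
    · have : (0:ℝ) ≤ ‖T x‖ ^ p' := Real.rpow_nonneg (norm_nonneg _) _
      linarith
    · have h2 : ‖T x‖ ^ (1:ℝ) ≤ ‖T x‖ ^ p' :=
        Real.rpow_le_rpow_of_exponent_le h1.le (by linarith)
      rw [Real.rpow_one] at h2
      linarith
  -- bounds for u and its gradient
  obtain ⟨Mu, hMu⟩ := huc.continuous.bounded_above_of_compact_support husupp
  have hgradsupp : HasCompactSupport (gradient u) := by
    refine hKc.of_isClosed_subset (isClosed_tsupport _) (closure_minimal ?_ (isClosed_tsupport u))
    intro x hx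
    by_contra hxK
    exact hx (gradient_eq_zero_of_not_mem_tsupport huc hxK)
  obtain ⟨Mg, hMg⟩ := (continuous_gradient huc).bounded_above_of_compact_support hgradsupp
  have hgum : Measurable (gradient u) := (continuous_gradient huc).measurable
  -- dominator helper
  have domInt : ∀ (h : EucSp n → ℝ) (C : ℝ), IntegrableOn h ω volume →
      Integrable (K.indicator fun x => C * h x) (volume.restrict Ω) := by
    intro h C hint
    exact (IntegrableOn.integrable_indicator ((hint.mono_set hKω).const_mul C) hKmeas).restrict
  -- key integrable functions
  have hanormTm : Measurable fun x => anorm (A x) (T x) :=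
    (measurable_mdot_comp hAmeas hTm hTm).sqrt
  have hanormTp'm : Measurable fun x => anorm (A x) (T x) ^ p' :=
    (Real.continuous_rpow_const hp'0.le).measurable.comp hanormTm
  have hIa : Integrable (fun x => anorm (A x) (gradient u x) ^ p) (volume.restrict Ω) := by
    refine Integrable.mono' (domInt (fun _ => (1:ℝ)) ((θ⁻¹ * Mg) ^ p)
      (integrableOn_const hωvol.ne))
      ((Real.continuous_rpow_const hp0.le).measurable.comp
        ((measurable_mdot_comp hAmeas hgum hgum).sqrt)).aestronglyMeasurable ?_
    filter_upwards [hGood] with x hx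
    by_cases hxK : x ∈ K
    · rw [Set.indicator_of_mem hxK, mul_one, Real.norm_eq_abs,
        abs_of_nonneg (Real.rpow_nonneg anorm_nonneg _)]
      have h1 : anorm (A x) (gradient u x) ≤ θ⁻¹ * ‖gradient u x‖ := (hx (hKω hxK) _).2
      have h2 : θ⁻¹ * ‖gradient u x‖ ≤ θ⁻¹ * Mg :=
        mul_le_mul_of_nonneg_left (hMg x) hθi.le
      exact Real.rpow_le_rpow anorm_nonneg (h1.trans h2) hp0.le
    · rw [Set.indicator_of_notMem hxK,
        gradient_eq_zero_of_not_mem_tsupport huc hxK, anorm_zero,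
        Real.zero_rpow hp0.ne']
      simp
  have hIT : Integrable (K.indicator fun y => anorm (A y) (T y) ^ p') (volume.restrict Ω) := by
    refine Integrable.mono' (domInt (fun x => ‖T x‖ ^ p') ((θ⁻¹) ^ p') hTp')
      (hanormTp'm.indicator hKmeas).aestronglyMeasurable ?_
    filter_upwards [hGood] with x hx
    by_cases hxK : x ∈ K
    · rw [Set.indicator_of_mem hxK, Set.indicator_of_mem hxK, Real.norm_eq_abs,
        abs_of_nonneg (Real.rpow_nonneg anorm_nonneg _), ← Real.mul_rpow hθi.le (norm_nonneg _)]
      exact Real.rpow_le_rpow anorm_nonneg (hx (hKω hxK) _).2 hp'0.le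
    · rw [Set.indicator_of_notMem hxK, Set.indicator_of_notMem hxK]
      simp
  have hCT0 : 0 ≤ ∫ x in Ω, K.indicator (fun y => anorm (A y) (T y) ^ p') x :=
    integral_nonneg fun x => by
      simp only [Pi.zero_apply]
      by_cases hxK : x ∈ K
      · rw [Set.indicator_of_mem hxK]; exact Real.rpow_nonneg anorm_nonneg _
      · rw [Set.indicator_of_notMem hxK]
  have hIVu : Integrable (fun x => V x * |u x| ^ p) (volume.restrict Ω) := by
    refine Integrable.mono' (domInt (fun x => |V x|) (Mu ^ p) hVω.abs)
      (hVm.mul ((Real.continuous_rpow_const hp0.le).measurable.comp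
        huc.continuous.abs.measurable)).aestronglyMeasurable ?_
    refine ae_of_all _ fun x => ?_
    by_cases hxK : x ∈ K
    · rw [Set.indicator_of_mem hxK, Real.norm_eq_abs, abs_mul,
        abs_of_nonneg (Real.rpow_nonneg (abs_nonneg _) _)]
      have h1 : |u x| ≤ Mu := by
        have := hMu x; rwa [Real.norm_eq_abs] at this
      have h2 : |u x| ^ p ≤ Mu ^ p := Real.rpow_le_rpow (abs_nonneg _) h1 hp0.le
      calc |V x| * |u x| ^ p ≤ |V x| * Mu ^ p :=
            mul_le_mul_of_nonneg_left h2 (abs_nonneg _)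
        _ = Mu ^ p * |V x| := by ring
    · rw [Set.indicator_of_notMem hxK, image_eq_zero_of_notMem_tsupport hxK, abs_zero,
        Real.zero_rpow hp0.ne', mul_zero]
      simp
  -- abbreviations
  set J : ℝ := ∫ x in Ω, anorm (A x) (gradient u x) ^ p with hJdef
  set CT : ℝ := ∫ x in Ω, K.indicator (fun y => anorm (A y) (T y) ^ p') x with hCTdef
  -- the main per-ε estimate
  have main : ∀ ε : ℝ, 0 < ε →
      -J - (p - 1) * ε ^ p * CT ≤ ∫ x in Ω, V x * phiEps p ε u x := by
    intro ε hε
    set φ := phiEps p ε u with hφdef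
    set c := fun x => p * u x * (u x ^ 2 + ε ^ 2) ^ (p / 2 - 1) with hcdef
    have hφc : ContDiff ℝ (⊤ : ℕ∞) φ := phiEps_contDiff huc hε
    have hφsupp : Function.support φ ⊆ Function.support u := phiEps_support hp0.le hε
    have hφcs : HasCompactSupport φ := husupp.mono hφsupp
    have hφtest : IsTest Ω φ := ⟨hφc, hφcs, (closure_mono hφsupp).trans huΩ⟩
    have hφ0 : ∀ x, 0 ≤ φ x := phiEps_nonneg hp0.le hε
    have hgradφ : ∀ x, gradient φ x = c x • gradient u x := fun x => gradient_phiEps huc hε x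
    have hsub' := hsub φ hφtest hφ0
    have hwcont : Continuous fun x => u x ^ 2 + ε ^ 2 :=
      (huc.continuous.pow 2).add continuous_const
    have hccont : Continuous c := by
      refine (continuous_const.mul huc.continuous).mul ?_
      exact continuous_iff_continuousAt.mpr fun x =>
        hwcont.continuousAt.rpow_const (Or.inl (by positivity))
    have hcsupp : HasCompactSupport c := by
      refine husupp.mono ?_
      intro x hx
      simp only [Function.mem_support] at hx ⊢
      intro h0
      exact hx (by rw [hcdef]; simp [h0])
    obtain ⟨Mc, hMc⟩ := hccont.bounded_above_of_compact_support hcsupp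
    obtain ⟨Mφ, hMφ⟩ := hφc.continuous.bounded_above_of_compact_support hφcs
    have hMc0 : (0:ℝ) ≤ Mc := le_trans (norm_nonneg _) (hMc (Classical.arbitrary _))
    have hMg0 : (0:ℝ) ≤ Mg := le_trans (norm_nonneg _) (hMg (Classical.arbitrary _))
    have hgφm : Measurable (gradient φ) := (continuous_gradient hφc).measurable
    have hIF1 : Integrable (fun x => mdot (A x) (gradient φ x) (T x)) (volume.restrict Ω) := by
      refine Integrable.mono' (domInt (fun x => ‖T x‖) (θ⁻¹ * (Mc * Mg) * θ⁻¹) hT1)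
        (measurable_mdot_comp hAmeas hgφm hTm).aestronglyMeasurable ?_
      filter_upwards [hGood] with x hx
      by_cases hxK : x ∈ K
      · have hP := hx (hKω hxK)
        have hpsd := mdot_nonneg_of_lb hθ (fun ζ => (hP ζ).1)
        have hcs := abs_mdot_le (hAsymm x) hpsd (ξ := gradient φ x) (η := T x)
        rw [Set.indicator_of_mem hxK, Real.norm_eq_abs]
        have h1 : anorm (A x) (gradient φ x) ≤ θ⁻¹ * (Mc * Mg) := by
          refine (hP _).2.trans ?_
          rw [hgradφ x, norm_smul]
          exact mul_le_mul_of_nonneg_left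
            (mul_le_mul (hMc x) (hMg x) (norm_nonneg _) hMc0) hθi.le
        have h2 : anorm (A x) (T x) ≤ θ⁻¹ * ‖T x‖ := (hP _).2
        calc |mdot (A x) (gradient φ x) (T x)|
            ≤ anorm (A x) (gradient φ x) * anorm (A x) (T x) := hcs
          _ ≤ (θ⁻¹ * (Mc * Mg)) * (θ⁻¹ * ‖T x‖) :=
              mul_le_mul h1 h2 anorm_nonneg
                (mul_nonneg hθi.le (mul_nonneg hMc0 hMg0))
          _ = θ⁻¹ * (Mc * Mg) * θ⁻¹ * ‖T x‖ := by ring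
      · rw [Set.indicator_of_notMem hxK, hgradφ x,
          gradient_eq_zero_of_not_mem_tsupport huc hxK, smul_zero]
        simp [mdot_zero_left]
    have hIF2 : Integrable (fun x => anorm (A x) (T x) ^ p' * φ x) (volume.restrict Ω) := by
      refine Integrable.mono' (domInt (fun x => ‖T x‖ ^ p') (θ⁻¹ ^ p' * Mφ) hTp')
        (hanormTp'm.mul hφc.continuous.measurable).aestronglyMeasurable ?_
      filter_upwards [hGood] with x hx
      by_cases hxK : x ∈ K
      · have hP := hx (hKω hxK)
        rw [Set.indicator_of_mem hxK, Real.norm_eq_abs, abs_mul,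
          abs_of_nonneg (Real.rpow_nonneg anorm_nonneg _), abs_of_nonneg (hφ0 x)]
        have h2 : anorm (A x) (T x) ^ p' ≤ θ⁻¹ ^ p' * ‖T x‖ ^ p' := by
          rw [← Real.mul_rpow hθi.le (norm_nonneg _)]
          exact Real.rpow_le_rpow anorm_nonneg (hP _).2 hp'0.le
        have h3 : φ x ≤ Mφ := (le_abs_self _).trans (by
          rw [← Real.norm_eq_abs]; exact hMφ x)
        calc anorm (A x) (T x) ^ p' * φ x
            ≤ (θ⁻¹ ^ p' * ‖T x‖ ^ p') * Mφ := by
              refine mul_le_mul h2 h3 (hφ0 x) (by positivity)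
          _ = θ⁻¹ ^ p' * Mφ * ‖T x‖ ^ p' := by ring
      · have hφx : φ x = 0 := phiEps_eq_zero hp0.le hε (image_eq_zero_of_notMem_tsupport hxK)
        rw [Set.indicator_of_notMem hxK, hφx, mul_zero]
        simp
    have hpt : (fun x => -(anorm (A x) (gradient u x) ^ p)
          - (p - 1) * ε ^ p * K.indicator (fun y => anorm (A y) (T y) ^ p') x)
        ≤ᶠ[ae (volume.restrict Ω)]
        (fun x => mdot (A x) (gradient φ x) (T x)
          + (p - 1) * (anorm (A x) (T x) ^ p' * φ x)) := by
      filter_upwards [hGood] with x hx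
      by_cases hxK : x ∈ K
      · have hP := hx (hKω hxK)
        have hpsd := mdot_nonneg_of_lb hθ (fun ζ => (hP ζ).1)
        have hcs := abs_mdot_le (hAsymm x) hpsd (ξ := gradient u x) (η := T x)
        have ha : (0:ℝ) ≤ anorm (A x) (gradient u x) := anorm_nonneg
        have hs : (0:ℝ) ≤ anorm (A x) (T x) := anorm_nonneg
        have hyoung := key_young hp hp' hε ha hs (u x)
        have h1 : -(p * |u x| * (u x ^ 2 + ε ^ 2) ^ (p / 2 - 1)
            * anorm (A x) (gradient u x) * anorm (A x) (T x))
            ≤ c x * mdot (A x) (gradient u x) (T x) := by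
          have hcabs : |c x| = p * |u x| * (u x ^ 2 + ε ^ 2) ^ (p / 2 - 1) := by
            rw [hcdef]
            rw [abs_mul, abs_mul, abs_of_pos hp0,
              abs_of_pos (Real.rpow_pos_of_pos (by positivity) _)]
          have habs : |c x * mdot (A x) (gradient u x) (T x)|
              ≤ p * |u x| * (u x ^ 2 + ε ^ 2) ^ (p / 2 - 1)
                * anorm (A x) (gradient u x) * anorm (A x) (T x) := by
            rw [abs_mul, hcabs]
            have hfac : (0:ℝ) ≤ p * |u x| * (u x ^ 2 + ε ^ 2) ^ (p / 2 - 1) := by positivity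
            exact (mul_le_mul_of_nonneg_left hcs hfac).trans (le_of_eq (by ring))
          have hneg := neg_abs_le (c x * mdot (A x) (gradient u x) (T x))
          linarith
        have hwphi : (u x ^ 2 + ε ^ 2) ^ (p / 2) = φ x + ε ^ p := by
          simp [hφdef, phiEps]
        rw [hwphi] at hyoung
        have hexp : (p - 1) * ((φ x + ε ^ p) * anorm (A x) (T x) ^ p')
            = (p - 1) * (anorm (A x) (T x) ^ p' * φ x)
              + (p - 1) * ε ^ p * anorm (A x) (T x) ^ p' := by ring
        rw [hgradφ x, mdot_smul_left, Set.indicator_of_mem hxK]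
        linarith
      · have hgu0 := gradient_eq_zero_of_not_mem_tsupport huc hxK
        have hφx : φ x = 0 := phiEps_eq_zero hp0.le hε (image_eq_zero_of_notMem_tsupport hxK)
        rw [hgradφ x, hgu0, smul_zero, Set.indicator_of_notMem hxK, hφx, mul_zero]
        simp [mdot_zero_left, anorm_zero, Real.zero_rpow hp0.ne']
    have hGint : Integrable (fun x => -(anorm (A x) (gradient u x) ^ p)
        - (p - 1) * ε ^ p * K.indicator (fun y => anorm (A y) (T y) ^ p') x)
        (volume.restrict Ω) :=
      hIa.neg.sub (hIT.const_mul ((p - 1) * ε ^ p))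
    have hFint : Integrable (fun x => mdot (A x) (gradient φ x) (T x)
        + (p - 1) * (anorm (A x) (T x) ^ p' * φ x)) (volume.restrict Ω) :=
      hIF1.add (hIF2.const_mul (p - 1))
    have hIan : Integrable (fun x => -(anorm (A x) (gradient u x) ^ p))
        (volume.restrict Ω) := hIa.neg
    have hITc : Integrable (fun x => ((p - 1) * ε ^ p) *
        K.indicator (fun y => anorm (A y) (T y) ^ p') x) (volume.restrict Ω) :=
      hIT.const_mul _
    have hIF2c : Integrable (fun x => (p - 1) * (anorm (A x) (T x) ^ p' * φ x))
        (volume.restrict Ω) := hIF2.const_mul _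
    have hle := integral_mono_ae hGint hFint hpt
    rw [integral_sub hIan hITc, integral_neg, integral_const_mul _ _,
      integral_add hIF1 hIF2c, integral_const_mul _ _] at hle
    rw [hJdef, hCTdef]
    exact hle.trans hsub'
  -- pass to the limit
  set εk : ℕ → ℝ := fun k => ((k : ℝ) + 1)⁻¹ with hεkdef
  have hεkpos : ∀ k, 0 < εk k := fun k => by positivity
  have hεk1 : ∀ k, εk k ≤ 1 := fun k => by
    rw [hεkdef]
    exact inv_le_one_of_one_le₀ (le_add_of_nonneg_left (Nat.cast_nonneg k))
  have hεk0 : Tendsto εk atTop (𝓝 0) := by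
    have := tendsto_one_div_add_atTop_nhds_zero_nat (𝕜 := ℝ)
    simpa [hεkdef, one_div] using this
  have hεkp : Tendsto (fun k => εk k ^ p) atTop (𝓝 0) := by
    have hc : ContinuousAt (fun t : ℝ => t ^ p) 0 :=
      Real.continuousAt_rpow_const _ _ (Or.inr hp0.le)
    have := hc.tendsto.comp hεk0
    simpa [Function.comp_def, Real.zero_rpow hp0.ne'] using this
  have hMu0 : (0:ℝ) ≤ Mu := le_trans (norm_nonneg _) (hMu (Classical.arbitrary _))
  have hVφmeas : ∀ k, AEStronglyMeasurable (fun x => V x * phiEps p (εk k) u x)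
      (volume.restrict Ω) := fun k =>
    (hVm.mul ((phiEps_contDiff huc (hεkpos k)).continuous.measurable)).aestronglyMeasurable
  have hbound : Integrable (K.indicator fun x => (Mu ^ 2 + 1) ^ (p / 2) * |V x|)
      (volume.restrict Ω) := domInt (fun x => |V x|) ((Mu ^ 2 + 1) ^ (p / 2)) hVω.abs
  have hb : ∀ k, ∀ᵐ x ∂(volume.restrict Ω), ‖V x * phiEps p (εk k) u x‖
      ≤ K.indicator (fun x => (Mu ^ 2 + 1) ^ (p / 2) * |V x|) x := by
    intro k
    refine ae_of_all _ fun x => ?_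
    by_cases hxK : x ∈ K
    · rw [Set.indicator_of_mem hxK, Real.norm_eq_abs, abs_mul,
        abs_of_nonneg (phiEps_nonneg hp0.le (hεkpos k) x)]
      have h2 : phiEps p (εk k) u x ≤ (u x ^ 2 + 1) ^ (p / 2) :=
        phiEps_le hp0.le (hεkpos k) (hεk1 k) x
      have hux : |u x| ≤ Mu := by
        have := hMu x; rwa [Real.norm_eq_abs] at this
      have h3 : (u x ^ 2 + 1 : ℝ) ^ (p / 2) ≤ (Mu ^ 2 + 1) ^ (p / 2) := by
        refine Real.rpow_le_rpow (by positivity) ?_ (by positivity)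
        nlinarith [sq_abs (u x), abs_nonneg (u x)]
      calc |V x| * phiEps p (εk k) u x ≤ |V x| * (Mu ^ 2 + 1) ^ (p / 2) :=
            mul_le_mul_of_nonneg_left (h2.trans h3) (abs_nonneg _)
        _ = (Mu ^ 2 + 1) ^ (p / 2) * |V x| := mul_comm _ _
    · rw [Set.indicator_of_notMem hxK,
        phiEps_eq_zero hp0.le (hεkpos k) (image_eq_zero_of_notMem_tsupport hxK), mul_zero]
      simp
  have hlim : ∀ᵐ x ∂(volume.restrict Ω), Tendsto (fun k => V x * phiEps p (εk k) u x)
      atTop (𝓝 (V x * |u x| ^ p)) := by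
    refine ae_of_all _ fun x => ?_
    have h0 : Tendsto (fun k => εk k ^ 2) atTop (𝓝 0) := by
      have := hεk0.mul hεk0
      rw [mul_zero] at this
      simpa [pow_two] using this
    have h1 : Tendsto (fun k => u x ^ 2 + εk k ^ 2) atTop (𝓝 (u x ^ 2)) := by
      simpa using tendsto_const_nhds.add h0
    have h2 : Tendsto (fun k => (u x ^ 2 + εk k ^ 2) ^ (p / 2)) atTop
        (𝓝 ((u x ^ 2) ^ (p / 2))) := by
      have hc : ContinuousAt (fun t : ℝ => t ^ (p / 2)) (u x ^ 2) :=
        Real.continuousAt_rpow_const _ _ (Or.inr (by positivity))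
      exact hc.tendsto.comp h1
    have h4 : Tendsto (fun k => phiEps p (εk k) u x) atTop (𝓝 (|u x| ^ p)) := by
      have h5 := h2.sub hεkp
      rw [sub_zero] at h5
      have habs : (u x ^ 2 : ℝ) ^ (p / 2) = |u x| ^ p := by
        rw [← sq_abs, ← Real.rpow_natCast |u x| 2, ← Real.rpow_mul (abs_nonneg _)]
        congr 1
        ring
      rw [habs] at h5
      exact h5
    exact h4.const_mul (V x)
  have hDCT := tendsto_integral_of_dominated_convergence _ hVφmeas hbound hb hlim
  have hRHS : Tendsto (fun k => -J - (p - 1) * εk k ^ p * CT) atTop (𝓝 (-J)) := by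
    have h6 := (tendsto_const_nhds : Tendsto (fun _ : ℕ => -J) atTop (𝓝 (-J))).sub
      ((hεkp.const_mul (p - 1)).mul_const CT)
    simpa using h6
  have hfinal : -J ≤ ∫ x in Ω, V x * |u x| ^ p :=
    le_of_tendsto_of_tendsto' hRHS hDCT (fun k => main (εk k) (hεkpos k))
  rw [integral_add hIa hIVu, ← hJdef]
  linarith
end
end

section
/- Let n ≥ 2, 1 < p < ∞ with p' = p/(p−1), let Ω ⊆ ℝⁿ be a domain, and let A be locally uniformly positive definite and locally bounded on Ω. Then for every measurable vector field T : Ω → ℝⁿ with ∫_ω |T|^{p'} dx < ∞ for every open ω with compact closure in Ω, and every u ∈ C_c^∞(Ω), one has ∫_Ω |∇u|_A^p dx ≥ −∫_Ω (A T)·∇(|u|^p) dx − (p−1)·∫_Ω |T|_A^{p'}·|u|^p dx, where ∇(|u|^p) := p·|u|^{p-2}·u·∇u (interpreted as 0 wherever u = 0). -/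
open MeasureTheory Filter
open scoped ENNReal Topology

noncomputable section

namespace EnergyAux

variable {n : ℕ}

lemma mdot_add_left {A : Matrix (Fin n) (Fin n) ℝ} (ξ ζ η : EucSp n) :
    mdot A (ξ + ζ) η = mdot A ξ η + mdot A ζ η := by
  unfold mdot
  rw [← Finset.sum_add_distrib]
  refine Finset.sum_congr rfl fun i _ => ?_
  rw [← Finset.sum_add_distrib]
  refine Finset.sum_congr rfl fun j _ => ?_
  simp only [PiLp.add_apply]
  ring

lemma mdot_add_right {A : Matrix (Fin n) (Fin n) ℝ} (ξ ζ η : EucSp n) :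
    mdot A η (ξ + ζ) = mdot A η ξ + mdot A η ζ := by
  unfold mdot
  rw [← Finset.sum_add_distrib]
  refine Finset.sum_congr rfl fun i _ => ?_
  rw [← Finset.sum_add_distrib]
  refine Finset.sum_congr rfl fun j _ => ?_
  simp only [PiLp.add_apply]
  ring

lemma mdot_smul_left {A : Matrix (Fin n) (Fin n) ℝ} (t : ℝ) (ξ η : EucSp n) :
    mdot A (t • ξ) η = t * mdot A ξ η := by
  unfold mdot
  rw [Finset.mul_sum]
  refine Finset.sum_congr rfl fun i _ => ?_
  rw [Finset.mul_sum]
  refine Finset.sum_congr rfl fun j _ => ?_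
  simp only [PiLp.smul_apply, smul_eq_mul]
  ring

lemma mdot_smul_right {A : Matrix (Fin n) (Fin n) ℝ} (t : ℝ) (ξ η : EucSp n) :
    mdot A η (t • ξ) = t * mdot A η ξ := by
  unfold mdot
  rw [Finset.mul_sum]
  refine Finset.sum_congr rfl fun i _ => ?_
  rw [Finset.mul_sum]
  refine Finset.sum_congr rfl fun j _ => ?_
  simp only [PiLp.smul_apply, smul_eq_mul]
  ring

lemma mdot_comm {A : Matrix (Fin n) (Fin n) ℝ} (hs : A.IsSymm) (ξ η : EucSp n) :
    mdot A ξ η = mdot A η ξ := by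
  unfold mdot
  rw [Finset.sum_comm]
  refine Finset.sum_congr rfl fun i _ => Finset.sum_congr rfl fun j _ => ?_
  rw [hs.apply i j]
  ring

lemma mdot_zero {A : Matrix (Fin n) (Fin n) ℝ} : mdot A (0 : EucSp n) 0 = 0 := by
  unfold mdot
  simp

lemma anorm_zero {A : Matrix (Fin n) (Fin n) ℝ} : anorm A (0 : EucSp n) = 0 := by
  unfold anorm
  rw [mdot_zero, Real.sqrt_zero]

lemma mdot_cauchy {A : Matrix (Fin n) (Fin n) ℝ} (hs : A.IsSymm)
    (hpos : ∀ ξ : EucSp n, 0 ≤ mdot A ξ ξ) (ξ η : EucSp n) :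
    |mdot A ξ η| ≤ anorm A ξ * anorm A η := by
  have key : ∀ t : ℝ, 0 ≤ mdot A ξ ξ * (t * t) + 2 * mdot A ξ η * t + mdot A η η := by
    intro t
    have h := hpos (t • ξ + η)
    rw [mdot_add_left, mdot_add_right, mdot_add_right, mdot_smul_left, mdot_smul_left,
      mdot_smul_right, mdot_smul_right, mdot_comm hs η ξ] at h
    ring_nf at h ⊢
    linarith
  have hd := discrim_le_zero key
  rw [discrim] at hd
  have hb2 : mdot A ξ η ^ 2 ≤ mdot A ξ ξ * mdot A η η := by nlinarith
  calc |mdot A ξ η| = Real.sqrt (mdot A ξ η ^ 2) := (Real.sqrt_sq_eq_abs _).symm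
    _ ≤ Real.sqrt (mdot A ξ ξ * mdot A η η) := Real.sqrt_le_sqrt hb2
    _ = anorm A ξ * anorm A η := Real.sqrt_mul (hpos ξ) _

lemma measurable_rpow_const' {α : Type*} [MeasurableSpace α] {f : α → ℝ} (hf : Measurable f)
    (h0 : ∀ x, 0 ≤ f x) (c : ℝ) : Measurable fun x => f x ^ c := by
  classical
  have heq : (fun x => f x ^ c) = fun x =>
      if f x = 0 then (if c = 0 then 1 else 0) else Real.exp (Real.log (f x) * c) := by
    funext x
    by_cases h : f x = 0
    · rw [if_pos h, h]
      by_cases hc : c = 0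
      · rw [if_pos hc, hc, Real.rpow_zero]
      · rw [if_neg hc, Real.zero_rpow hc]
    · rw [if_neg h, Real.rpow_def_of_pos (lt_of_le_of_ne (h0 x) (Ne.symm h))]
  rw [heq]
  exact Measurable.ite (hf (measurableSet_singleton 0)) measurable_const
    (Real.measurable_exp.comp ((Real.measurable_log.comp hf).mul_const c))

lemma key_pointwise {p p' : ℝ} (hp : 1 < p) (hp' : p' = p / (p - 1))
    {A : Matrix (Fin n) (Fin n) ℝ} (hs : A.IsSymm) (hpos : ∀ ξ : EucSp n, 0 ≤ mdot A ξ ξ)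
    (v : ℝ) (g t : EucSp n) :
    |(p * |v| ^ (p - 2) * v) * mdot A g t| ≤
      anorm A g ^ p + (p - 1) * (anorm A t ^ p' * |v| ^ p) := by
  have hpq : p.HolderConjugate p' := (Real.holderConjugate_iff_eq_conjExponent hp).2 hp'
  have hppos : (0:ℝ) < p := hpq.pos
  have hp'nn : (0:ℝ) ≤ p' := hpq.symm.nonneg
  have hv : (0:ℝ) ≤ |v| := abs_nonneg v
  have ha : (0:ℝ) ≤ anorm A g := Real.sqrt_nonneg _
  have hb : (0:ℝ) ≤ anorm A t := Real.sqrt_nonneg _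
  have hvv : |v| ^ (p - 2) * |v| = |v| ^ (p - 1) := by
    calc |v| ^ (p-2) * |v| = |v| ^ (p-2) * |v| ^ (1:ℝ) := by rw [Real.rpow_one]
      _ = |v| ^ ((p-2) + 1) := (Real.rpow_add' hv (by intro h; linarith [h]; )).symm
      _ = |v| ^ (p-1) := by congr 1; ring
  have h1 : |(p * |v| ^ (p - 2) * v) * mdot A g t| = p * |v| ^ (p - 1) * |mdot A g t| := by
    rw [abs_mul, abs_mul, abs_mul, abs_of_nonneg hppos.le,
      abs_of_nonneg (Real.rpow_nonneg hv _), mul_assoc p, hvv]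
  have hcs : |mdot A g t| ≤ anorm A g * anorm A t := mdot_cauchy hs hpos g t
  have hbv : (0:ℝ) ≤ anorm A t * |v| ^ (p - 1) :=
    mul_nonneg hb (Real.rpow_nonneg hv _)
  have hyoung := Real.young_inequality_of_nonneg ha hbv hpq
  have hbp : (anorm A t * |v| ^ (p - 1)) ^ p' = anorm A t ^ p' * |v| ^ p := by
    rw [Real.mul_rpow hb (Real.rpow_nonneg hv _), ← Real.rpow_mul hv, hpq.sub_one_mul_conj]
  have hpp' : p / p' = p - 1 := hpq.div_conj_eq_sub_one
  have hp0 : p ≠ 0 := hpq.ne_zero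
  have hp'0 : p' ≠ 0 := hpq.symm.ne_zero
  calc |(p * |v| ^ (p - 2) * v) * mdot A g t| = p * |v| ^ (p - 1) * |mdot A g t| := h1
    _ ≤ p * |v| ^ (p - 1) * (anorm A g * anorm A t) :=
        mul_le_mul_of_nonneg_left hcs (mul_nonneg hppos.le (Real.rpow_nonneg hv _))
    _ = p * (anorm A g * (anorm A t * |v| ^ (p - 1))) := by ring
    _ ≤ p * (anorm A g ^ p / p + (anorm A t * |v| ^ (p - 1)) ^ p' / p') :=
        mul_le_mul_of_nonneg_left hyoung hppos.le
    _ = anorm A g ^ p + (p / p') * (anorm A t * |v| ^ (p - 1)) ^ p' := by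
        field_simp
    _ = anorm A g ^ p + (p - 1) * (anorm A t ^ p' * |v| ^ p) := by rw [hpp', hbp]

end EnergyAux

/-- **A lower bound for the Dirichlet energy via first-order vector fields.** -/
theorem energy_lower_bound_via_vector_field (n : ℕ) (hn : 2 ≤ n)
    (p p' : ℝ) (hp : 1 < p) (hp' : p' = p / (p - 1))
    (Ω : Set (EucSp n)) (hΩo : IsOpen Ω) (hΩc : IsConnected Ω)
    (A : EucSp n → Matrix (Fin n) (Fin n) ℝ) (hA : LocUnifElliptic A Ω)
    (T : EucSp n → EucSp n) (hTm : Measurable T)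
    (hTloc : ∀ ω : Set (EucSp n), IsOpen ω → IsCompact (closure ω) → closure ω ⊆ Ω →
      (∫⁻ x in ω, ENNReal.ofReal (‖T x‖ ^ p')) < ⊤)
    (u : EucSp n → ℝ) (hu : IsTest Ω u) :
    (∫ x in Ω, anorm (A x) (gradient u x) ^ p) ≥
      -(∫ x in Ω, (p * |u x| ^ (p - 2) * u x) * mdot (A x) (gradient u x) (T x)) -
        (p - 1) * ∫ x in Ω, anorm (A x) (T x) ^ p' * |u x| ^ p := by
  classical
  obtain ⟨hsm, hAm, hAloc⟩ := hA
  obtain ⟨husm, hucs, huΩ⟩ := hu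
  have hpq : p.HolderConjugate p' := (Real.holderConjugate_iff_eq_conjExponent hp).2 hp'
  have hppos : (0:ℝ) < p := hpq.pos
  have hp'pos : (0:ℝ) < p' := hpq.symm.pos
  obtain ⟨L, hLc, hKL, hLΩ⟩ := exists_compact_between hucs hΩo huΩ
  set ω : Set (EucSp n) := interior L with hωdef
  have hωo : IsOpen ω := isOpen_interior
  have hclL : closure ω ⊆ L := closure_minimal interior_subset hLc.isClosed
  have hωc : IsCompact (closure ω) := hLc.of_isClosed_subset isClosed_closure hclL
  have hωΩ : closure ω ⊆ Ω := hclL.trans hLΩ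
  have hωmeas : MeasurableSet ω := hωo.measurableSet
  have hωvol : volume ω < ⊤ := lt_of_le_of_lt (measure_mono subset_closure) hωc.measure_lt_top
  obtain ⟨θ, hθ, hθae⟩ := hAloc ω hωo hωc hωΩ
  have hθ' : (0:ℝ) ≤ θ⁻¹ := inv_nonneg.2 hθ.le
  -- continuity / support of the gradient
  have hgc : Continuous (gradient u) :=
    ((InnerProductSpace.toDual ℝ (EucSp n)).symm.continuous).comp
      (husm.continuous_fderiv (by simp))
  have hgu_zero : ∀ x, x ∉ tsupport u → gradient u x = 0 := by
    intro x hx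
    have h0 : fderiv ℝ u x = 0 := by
      by_contra h
      exact hx (support_fderiv_subset ℝ h)
    show (InnerProductSpace.toDual ℝ (EucSp n)).symm (fderiv ℝ u x) = 0
    rw [h0, map_zero]
  have hgcs : HasCompactSupport (gradient u) := by
    apply hucs.mono'
    intro x hx
    by_contra h
    exact hx (hgu_zero x h)
  obtain ⟨Cu, hCu⟩ := hucs.exists_bound_of_continuous husm.continuous
  obtain ⟨Cg, hCg⟩ := hgcs.exists_bound_of_continuous hgc
  set Cu' : ℝ := max Cu 0 with hCu'def
  set Cg' : ℝ := max Cg 0 with hCg'def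
  have hCu' : ∀ x, |u x| ≤ Cu' := fun x => by
    rw [← Real.norm_eq_abs]; exact (hCu x).trans (le_max_left _ _)
  have hCg' : ∀ x, ‖gradient u x‖ ≤ Cg' := fun x => (hCg x).trans (le_max_left _ _)
  -- measurability
  have hTi : ∀ i : Fin n, Measurable fun x => T x i := fun i =>
    (EuclideanSpace.proj (𝕜 := ℝ) i).continuous.measurable.comp hTm
  have hgm : Measurable (gradient u) := hgc.measurable
  have hgui : ∀ i : Fin n, Measurable fun x => gradient u x i := fun i =>
    (EuclideanSpace.proj (𝕜 := ℝ) i).continuous.measurable.comp hgm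
  have hum : Measurable u := husm.continuous.measurable
  have hmdotm : ∀ (f g : EucSp n → EucSp n), (∀ i, Measurable fun x => f x i) →
      (∀ i, Measurable fun x => g x i) → Measurable fun x => mdot (A x) (f x) (g x) := by
    intro f g hf hg
    unfold mdot
    exact Finset.measurable_sum _ fun i _ => Finset.measurable_sum _ fun j _ =>
      ((hAm i j).mul (hf i)).mul (hg j)
  have hanT : Measurable fun x => anorm (A x) (T x) := by
    unfold anorm; exact (hmdotm _ _ hTi hTi).sqrt
  have hanG : Measurable fun x => anorm (A x) (gradient u x) := by
    unfold anorm; exact (hmdotm _ _ hgui hgui).sqrt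
  have hFm : Measurable fun x => anorm (A x) (gradient u x) ^ p :=
    EnergyAux.measurable_rpow_const' hanG (fun _ => Real.sqrt_nonneg _) p
  have hHm : Measurable fun x => anorm (A x) (T x) ^ p' * |u x| ^ p :=
    (EnergyAux.measurable_rpow_const' hanT (fun _ => Real.sqrt_nonneg _) p').mul
      (EnergyAux.measurable_rpow_const' hum.abs (fun _ => abs_nonneg _) p)
  have hGm : Measurable fun x =>
      (p * |u x| ^ (p - 2) * u x) * mdot (A x) (gradient u x) (T x) :=
    (((measurable_const.mul
        (EnergyAux.measurable_rpow_const' hum.abs (fun _ => abs_nonneg _) (p-2))).mul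
      hum).mul (hmdotm _ _ hgui hTi))
  -- the a.e. ellipticity statement, transported to the restriction to Ω
  have hP : ∀ᵐ x ∂(volume : Measure (EucSp n)), x ∈ ω → ∀ ξ : EucSp n,
      θ * ‖ξ‖ ≤ anorm (A x) ξ ∧ anorm (A x) ξ ≤ θ⁻¹ * ‖ξ‖ :=
    (ae_restrict_iff' hωmeas).1 hθae
  have hPΩ : ∀ᵐ x ∂(volume.restrict Ω), x ∈ ω → ∀ ξ : EucSp n,
      θ * ‖ξ‖ ≤ anorm (A x) ξ ∧ anorm (A x) ξ ≤ θ⁻¹ * ‖ξ‖ :=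
    ae_restrict_of_ae hP
  -- the key pointwise inequality, a.e. on Ω
  have hkey : ∀ᵐ x ∂(volume.restrict Ω),
      |(p * |u x| ^ (p - 2) * u x) * mdot (A x) (gradient u x) (T x)| ≤
        anorm (A x) (gradient u x) ^ p +
          (p - 1) * (anorm (A x) (T x) ^ p' * |u x| ^ p) := by
    filter_upwards [hPΩ] with x hx
    by_cases hxω : x ∈ ω
    · have hpos : ∀ ξ : EucSp n, 0 ≤ mdot (A x) ξ ξ := by
        intro ξ
        by_contra hneg
        push_neg at hneg
        have h0 : anorm (A x) ξ = 0 := Real.sqrt_eq_zero'.2 hneg.le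
        have h1 := (hx hxω ξ).1
        rw [h0] at h1
        have hn0 : ‖ξ‖ = 0 := le_antisymm (by nlinarith [norm_nonneg ξ]) (norm_nonneg ξ)
        rw [norm_eq_zero.1 hn0] at hneg
        rw [EnergyAux.mdot_zero] at hneg
        exact absurd hneg (lt_irrefl 0)
      exact EnergyAux.key_pointwise hp hp' (hsm x) hpos (u x) (gradient u x) (T x)
    · have hu0 : u x = 0 := image_eq_zero_of_notMem_tsupport fun h => hxω (hKL h)
      rw [hu0]
      simp only [mul_zero, zero_mul, abs_zero, Real.zero_rpow hppos.ne', add_zero]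
      exact Real.rpow_nonneg (Real.sqrt_nonneg _) _
  -- integrability of the three integrands
  have hTp'int : IntegrableOn (fun x => ‖T x‖ ^ p') ω volume := by
    refine ⟨(EnergyAux.measurable_rpow_const' hTm.norm
      (fun _ => norm_nonneg _) p').aestronglyMeasurable, ?_⟩
    rw [hasFiniteIntegral_iff_ofReal
      (Filter.Eventually.of_forall fun x => Real.rpow_nonneg (norm_nonneg _) _)]
    exact hTloc ω hωo hωc hωΩ
  have hHb : ∀ᵐ x ∂(volume.restrict Ω),
      ‖anorm (A x) (T x) ^ p' * |u x| ^ p‖ ≤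
        ω.indicator (fun x => θ⁻¹ ^ p' * Cu' ^ p * ‖T x‖ ^ p') x := by
    filter_upwards [hPΩ] with x hx
    by_cases hxω : x ∈ ω
    · have hnnT : (0:ℝ) ≤ anorm (A x) (T x) := Real.sqrt_nonneg _
      have hnn : (0:ℝ) ≤ anorm (A x) (T x) ^ p' * |u x| ^ p :=
        mul_nonneg (Real.rpow_nonneg hnnT _) (Real.rpow_nonneg (abs_nonneg _) _)
      rw [Set.indicator_of_mem hxω, Real.norm_eq_abs, abs_of_nonneg hnn]
      have h1 : anorm (A x) (T x) ^ p' ≤ (θ⁻¹ * ‖T x‖) ^ p' :=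
        Real.rpow_le_rpow (Real.sqrt_nonneg _) (hx hxω (T x)).2 hp'pos.le
      have h2 : |u x| ^ p ≤ Cu' ^ p :=
        Real.rpow_le_rpow (abs_nonneg _) (hCu' x) hppos.le
      calc anorm (A x) (T x) ^ p' * |u x| ^ p ≤ (θ⁻¹ * ‖T x‖) ^ p' * Cu' ^ p :=
            mul_le_mul h1 h2 (Real.rpow_nonneg (abs_nonneg _) _)
              (Real.rpow_nonneg (mul_nonneg hθ' (norm_nonneg _)) _)
        _ = θ⁻¹ ^ p' * Cu' ^ p * ‖T x‖ ^ p' := by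
            rw [Real.mul_rpow hθ' (norm_nonneg _)]; ring
    · rw [Set.indicator_of_notMem hxω]
      have hu0 : u x = 0 := image_eq_zero_of_notMem_tsupport fun h => hxω (hKL h)
      rw [hu0]
      simp [Real.zero_rpow hppos.ne']
  have hHint : Integrable (fun x => anorm (A x) (T x) ^ p' * |u x| ^ p)
      (volume.restrict Ω) := by
    refine Integrable.mono' ?_ hHm.aestronglyMeasurable hHb
    exact (IntegrableOn.integrable_indicator (hTp'int.const_mul _) hωmeas).restrict
  have hFb : ∀ᵐ x ∂(volume.restrict Ω),
      ‖anorm (A x) (gradient u x) ^ p‖ ≤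
        ω.indicator (fun _ => (θ⁻¹ * Cg') ^ p) x := by
    filter_upwards [hPΩ] with x hx
    by_cases hxω : x ∈ ω
    · have hnnG : (0:ℝ) ≤ anorm (A x) (gradient u x) := Real.sqrt_nonneg _
      rw [Set.indicator_of_mem hxω, Real.norm_eq_abs,
        abs_of_nonneg (Real.rpow_nonneg hnnG _)]
      refine Real.rpow_le_rpow (Real.sqrt_nonneg _) ?_ hppos.le
      exact (hx hxω (gradient u x)).2.trans (mul_le_mul_of_nonneg_left (hCg' x) hθ')
    · rw [Set.indicator_of_notMem hxω, hgu_zero x (fun h => hxω (hKL h)),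
        EnergyAux.anorm_zero, Real.zero_rpow hppos.ne']
      simp
  have hFint : Integrable (fun x => anorm (A x) (gradient u x) ^ p)
      (volume.restrict Ω) := by
    refine Integrable.mono' ?_ hFm.aestronglyMeasurable hFb
    exact ((integrableOn_const hωvol.ne).integrable_indicator hωmeas).restrict
  have hGb : ∀ᵐ x ∂(volume.restrict Ω),
      ‖(p * |u x| ^ (p - 2) * u x) * mdot (A x) (gradient u x) (T x)‖ ≤
        (fun x => anorm (A x) (gradient u x) ^ p +
          (p - 1) * (anorm (A x) (T x) ^ p' * |u x| ^ p)) x :=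
    hkey.mono fun x hx => by rw [Real.norm_eq_abs]; exact hx
  have hGint : Integrable
      (fun x => (p * |u x| ^ (p - 2) * u x) * mdot (A x) (gradient u x) (T x))
      (volume.restrict Ω) :=
    Integrable.mono' (hFint.add (hHint.const_mul (p-1))) hGm.aestronglyMeasurable hGb
  -- conclusion
  have hsum : 0 ≤ ∫ x in Ω, (anorm (A x) (gradient u x) ^ p +
      ((p * |u x| ^ (p - 2) * u x) * mdot (A x) (gradient u x) (T x) +
        (p - 1) * (anorm (A x) (T x) ^ p' * |u x| ^ p))) := by
    refine integral_nonneg_of_ae ?_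
    filter_upwards [hkey] with x hx
    have h2 := neg_abs_le
      ((p * |u x| ^ (p - 2) * u x) * mdot (A x) (gradient u x) (T x))
    simp only [Pi.zero_apply]
    linarith
  have hH' : Integrable (fun x => (p - 1) * (anorm (A x) (T x) ^ p' * |u x| ^ p))
      (volume.restrict Ω) := hHint.const_mul (p-1)
  have hGH : Integrable (fun x =>
      (p * |u x| ^ (p - 2) * u x) * mdot (A x) (gradient u x) (T x) +
        (p - 1) * (anorm (A x) (T x) ^ p' * |u x| ^ p)) (volume.restrict Ω) := by
    exact hGint.add hH'
  rw [integral_add hFint hGH, integral_add hGint hH', integral_const_mul] at hsum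
  linarith
end
end
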